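/- arXiv:1511.05109 — 14 statements merged into one kernel-verified Lean document; each statement's English description precedes it below -/
import Mathlib

section
/- In a distance-hereditary graph G, for any four vertices x, y, v, u with v on a shortest path between x and u, u on a shortest path between y and v, and d(u,v) > 1, we have d(x,y) = d(x,v) + d(v,u) + d(u,y). -/
open SimpleGraph

variable {V : Type*}

/-- Distance from a vertex to a set of vertices. -/
noncomputable def setDist (G : SimpleGraph V) (x : V) (S : Set V) : ℕ :=
  sInf (G.dist x '' S)

/-- Eccentricity of a set of vertices. -/
noncomputable def eccSet (G : SimpleGraph V) [Fintype V] (S : Set V) : ℕ :=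
  Finset.univ.sup fun v => setDist G v S

/-- Eccentricity of a vertex. -/
noncomputable def eccV (G : SimpleGraph V) [Fintype V] (v : V) : ℕ :=
  Finset.univ.sup fun u => G.dist v u

/-- Diameter of a graph. -/
noncomputable def diamG (G : SimpleGraph V) [Fintype V] : ℕ :=
  Finset.univ.sup fun v => eccV G v

/-- Projection of a vertex onto a set. -/
def proj (G : SimpleGraph V) (x : V) (S : Set V) : Set V :=
  {u ∈ S | G.dist x u = setDist G x S}

/-- The interval between two vertices. -/
def interval (G : SimpleGraph V) (a b : V) : Set V :=
  {w | G.dist a b = G.dist a w + G.dist w b}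

/-- Distance-hereditary: distances in connected induced subgraphs equal distances in `G`. -/
def DistHereditary (G : SimpleGraph V) : Prop :=
  ∀ S : Set V, (G.induce S).Connected →
    ∀ u v : S, (G.induce S).dist u v = G.dist u.1 v.1

/-- A walk is a shortest path. -/
def IsShortestPath (G : SimpleGraph V) {a b : V} (p : G.Walk a b) : Prop :=
  p.IsPath ∧ p.length = G.dist a b

/-- The 4-point condition characterizing distance-hereditary graphs: among the three
distance sums at least two are equal, and the largest exceeds the two equal ones by at most 2
(trivially so when the two equal sums are the larger ones). -/
def FourPointDH (G : SimpleGraph V) : Prop :=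
  ∀ u v w x : V,
    (G.dist u v + G.dist w x = G.dist u w + G.dist v x ∧
      G.dist u x + G.dist v w ≤ G.dist u v + G.dist w x + 2) ∨
    (G.dist u v + G.dist w x = G.dist u x + G.dist v w ∧
      G.dist u w + G.dist v x ≤ G.dist u v + G.dist w x + 2) ∨
    (G.dist u w + G.dist v x = G.dist u x + G.dist v w ∧
      G.dist u v + G.dist w x ≤ G.dist u w + G.dist v x + 2)

theorem stmt_0 {V : Type*} [Fintype V] (G : SimpleGraph V) (hconn : G.Connected)
    (hdh : FourPointDH G) (x y v u : V)
    (hv : G.dist x u = G.dist x v + G.dist v u)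
    (hu : G.dist y v = G.dist y u + G.dist u v)
    (hd : 1 < G.dist u v) :
    G.dist x y = G.dist x v + G.dist v u + G.dist u y := by
  have h1 : G.dist v u = G.dist u v := G.dist_comm ..
  have h2 : G.dist y u = G.dist u y := G.dist_comm ..
  have h3 : G.dist y v = G.dist v y := G.dist_comm ..
  rcases hdh x y v u with ⟨h, h'⟩ | ⟨h, h'⟩ | ⟨h, h'⟩ <;> omega
end

section
/- In a distance-hereditary graph G, let P be a shortest path between s and t, w an arbitrary vertex, a a vertex of the projection Pr(w,P) closest to s, and b a vertex of Pr(w,P) closest to t. Then d(a,b) ≤ 2. -/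
open SimpleGraph

variable {V : Type*}

/-!
Let `k = d(w, a) = d(w, b) ≥ 1`. The subpath of `P` from `a` to `b` stays at distance `≥ k` from
`w`. Pick a neighbour `x` of `a` with `d(w, x) = k - 1` and, among the vertices of that subpath
adjacent to `x`, the one `y` closest to `b`. A geodesic from `w` to `x`, the edge `xy` and the
subpath from `y` to `b` form an induced path, which distance-heredity makes a shortest path.
Its length `k + d(y, b)` is then at most `d(w, b) = k`, so `y = b` and
`d(a, b) ≤ d(a, x) + d(x, b) = 2`.
-/

section

variable {G : SimpleGraph V}

theorem SimpleGraph.Walk.le_add_length_of_adj_le {g : V → ℕ}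
    (hg : ∀ ⦃x y⦄, G.Adj x y → g y ≤ g x + 1) {u v : V} (p : G.Walk u v) :
    g v ≤ g u + p.length := by
  induction p with
  | nil => simp
  | cons h _ ih => grind [Walk.length_cons]

theorem SimpleGraph.Walk.dist_add_dist_eq_of_mem_support {u v x : V} {p : G.Walk u v}
    (hp : p.length = G.dist u v) (hx : x ∈ p.support) :
    G.dist u x + G.dist x v = G.dist u v := by
  classical
  rw [← length_eq_dist_of_subwalk hp (p.isSubwalk_takeUntil hx),
    ← length_eq_dist_of_subwalk hp (p.isSubwalk_dropUntil hx), ← Walk.length_append,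
    Walk.take_spec, hp]

theorem SimpleGraph.Walk.exists_length_eq_dist_support_subset {u v a b : V} {p : G.Walk u v}
    (hp : p.length = G.dist u v) (ha : a ∈ p.support) (hb : b ∈ p.support) :
    ∃ r : G.Walk a b, r.length = G.dist a b ∧ r.support ⊆ p.support := by
  classical
  have hb' : b ∈ ((p.takeUntil a ha).append (p.dropUntil a ha)).support := by
    rwa [Walk.take_spec]
  rcases (Walk.mem_support_append_iff _ _).1 hb' with hb' | hb'
  · have hsub := ((p.takeUntil a ha).isSubwalk_dropUntil hb').trans (p.isSubwalk_takeUntil ha)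
    refine ⟨((p.takeUntil a ha).dropUntil b hb').reverse, ?_, ?_⟩
    · rw [Walk.length_reverse, dist_comm]
      exact length_eq_dist_of_subwalk hp hsub
    · simpa using hsub.support_subset
  · have hsub := ((p.dropUntil a ha).isSubwalk_takeUntil hb').trans (p.isSubwalk_dropUntil ha)
    exact ⟨_, length_eq_dist_of_subwalk hp hsub, hsub.support_subset⟩

theorem SimpleGraph.exists_adj_dist_add_one_eq {w a : V} (h : G.dist w a ≠ 0) :
    ∃ x, G.Adj x a ∧ G.dist w x + 1 = G.dist w a := by
  obtain ⟨p, hp⟩ := (Reachable.of_dist_ne_zero h).symm.exists_walk_length_eq_dist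
  cases p with
  | nil => simp at h
  | @cons _ x _ hax q =>
    refine ⟨x, hax.symm, ?_⟩
    have h₁ := dist_le q
    have h₂ := (hax.reachable.dist_triangle_left w)
    rw [Walk.length_cons, dist_comm] at hp
    rw [dist_comm (u := a), dist_eq_one_iff_adj.2 hax] at h₂
    rw [dist_comm]
    omega

theorem DistHereditary.le_add_dist_of_adj_le (hdh : DistHereditary G) {S : Set V}
    (hS : (G.induce S).Connected) {g : V → ℕ}
    (hg : ∀ x ∈ S, ∀ y ∈ S, G.Adj x y → g y ≤ g x + 1) {u v : V} (hu : u ∈ S) (hv : v ∈ S) :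
    g v ≤ g u + G.dist u v := by
  obtain ⟨p, hp⟩ := hS.exists_walk_length_eq_dist ⟨u, hu⟩ ⟨v, hv⟩
  have := p.le_add_length_of_adj_le (g := fun x : S ↦ g x) fun x y h ↦ hg x x.2 y y.2 h
  rwa [hp, hdh S hS] at this

theorem DistHereditary.dist_add_one_add_dist_le (hconn : G.Connected) (hdh : DistHereditary G)
    {w x y b : V} (q : G.Walk w x) (hq : q.length = G.dist w x) (hxy : G.Adj x y)
    (r : G.Walk y b) (hfar : ∀ v ∈ r.support, G.dist w x < G.dist w v)
    (hx : ∀ v ∈ r.support, G.Adj x v → v = y) :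
    G.dist w x + 1 + G.dist y b ≤ G.dist w b := by
  set n := G.dist w x with hn
  let W : G.Walk w b := q.append (.cons hxy r)
  have hW : ∀ v ∈ W.support, G.dist w v + G.dist v x = n ∨ v ∈ r.support := by
    intro v hv
    simp only [W, Walk.mem_support_append_iff, Walk.support_cons, List.mem_cons] at hv
    rcases hv with hv | rfl | hv
    · exact .inl (Walk.dist_add_dist_eq_of_mem_support hq hv)
    · simp [hn]
    · exact .inr hv
  -- Along `q` and along `r`, `g` grows by at most one per edge; as `xy` is the only edge between
  -- `q` and `r`, the same holds on the whole subgraph induced by `W`.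
  let g : V → ℕ := fun v ↦ if G.dist w v ≤ n then G.dist w v else n + 1 + G.dist y v
  have hg : ∀ u ∈ {v | v ∈ W.support}, ∀ v ∈ {v | v ∈ W.support}, G.Adj u v → g v ≤ g u + 1 := by
    intro u hu v hv huv
    have hwv : G.dist w v ≤ G.dist w u + 1 := by
      simpa [dist_eq_one_iff_adj.2 huv] using hconn.dist_triangle (u := w) (v := u) (w := v)
    have hyv : G.dist y v ≤ G.dist y u + 1 := by
      simpa [dist_eq_one_iff_adj.2 huv] using hconn.dist_triangle (u := y) (v := u) (w := v)
    by_cases hvn : G.dist w v ≤ n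
    · simp only [g, hvn, if_true]
      split_ifs <;> omega
    have hvr : v ∈ r.support := (hW v hv).resolve_left (by omega)
    simp only [g, hvn, if_false]
    by_cases hun : G.dist w u ≤ n
    · have hux : u = x := by
        rcases hW u hu with h | h
        · exact hconn.dist_eq_zero_iff.1 (by omega)
        · exact absurd (hfar u h) (by omega)
      have hvy := hx v hvr (hux ▸ huv)
      rw [if_pos hun, hvy, SimpleGraph.dist_self, hux, ← hn]
    · simp only [hun, if_false]
      omega
  have key := hdh.le_add_dist_of_adj_le W.connected_induce_support hg W.start_mem_support
    W.end_mem_support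
  have hb := hfar b r.end_mem_support
  simp only [g, SimpleGraph.dist_self, zero_le, if_true, show ¬G.dist w b ≤ n by omega,
    if_false] at key
  omega

theorem DistHereditary.dist_le_two_of_forall_mem_support_le_dist (hconn : G.Connected)
    (hdh : DistHereditary G) {w a b : V} (r : G.Walk a b) (hr : r.length = G.dist a b)
    (hab : G.dist w a = G.dist w b) (hfar : ∀ v ∈ r.support, G.dist w a ≤ G.dist w v) :
    G.dist a b ≤ 2 := by
  classical
  by_cases hk : G.dist w a = 0
  · obtain rfl := hconn.dist_eq_zero_iff.1 hk
    obtain rfl := hconn.dist_eq_zero_iff.1 (hab ▸ hk)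
    simp
  obtain ⟨x, hxa, hwx⟩ := exists_adj_dist_add_one_eq hk
  obtain ⟨q, hq⟩ := hconn.exists_walk_length_eq_dist w x
  obtain ⟨y, hy, hymin⟩ := ({v ∈ r.support.toFinset | G.Adj x v}).exists_min_image
    (G.dist · b) ⟨a, by simp [hxa]⟩
  simp only [Finset.mem_filter, List.mem_toFinset] at hy hymin
  have hr' := length_eq_dist_of_subwalk hr (r.isSubwalk_dropUntil hy.1)
  have hyb := hdh.dist_add_one_add_dist_le hconn q hq hy.2 (r.dropUntil y hy.1)
    (fun v hv ↦ by have := hfar v (r.support_dropUntil_subset_support hy.1 hv); omega)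
    (fun v hv hxv ↦ by
      have h₁ := Walk.dist_add_dist_eq_of_mem_support hr' hv
      have h₂ := hymin v ⟨r.support_dropUntil_subset_support hy.1 hv, hxv⟩
      exact (hconn.dist_eq_zero_iff.1 (by omega)).symm)
  obtain rfl : y = b := hconn.dist_eq_zero_iff.1 (by omega)
  calc G.dist a y ≤ G.dist a x + G.dist x y := hconn.dist_triangle
    _ = 2 := by rw [dist_eq_one_iff_adj.2 hxa.symm, dist_eq_one_iff_adj.2 hy.2]

end

theorem stmt_1_general {V : Type*} (G : SimpleGraph V) (hconn : G.Connected)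
    (hdh : DistHereditary G) (s t w a b : V) (P : G.Walk s t) (hP : IsShortestPath G P)
    (ha : a ∈ proj G w {v | v ∈ P.support})
    (hb : b ∈ proj G w {v | v ∈ P.support}) :
    G.dist a b ≤ 2 := by
  obtain ⟨haP, hwa⟩ := ha
  obtain ⟨hbP, hwb⟩ := hb
  obtain ⟨r, hr, hrP⟩ := Walk.exists_length_eq_dist_support_subset hP.2 haP hbP
  refine hdh.dist_le_two_of_forall_mem_support_le_dist hconn r hr (hwa.trans hwb.symm) ?_
  exact fun v hv ↦ hwa ▸ Nat.sInf_le ⟨v, hrP hv, rfl⟩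

theorem stmt_1 {V : Type*} [Fintype V] (G : SimpleGraph V) (hconn : G.Connected)
    (hdh : DistHereditary G) (s t w a b : V) (P : G.Walk s t) (hP : IsShortestPath G P)
    (ha : a ∈ proj G w {v | v ∈ P.support})
    (hb : b ∈ proj G w {v | v ∈ P.support})
    (haClosest : ∀ u ∈ proj G w {v | v ∈ P.support}, G.dist s a ≤ G.dist s u)
    (hbClosest : ∀ u ∈ proj G w {v | v ∈ P.support}, G.dist t b ≤ G.dist t u) :
    G.dist a b ≤ 2 :=
  stmt_1_general G hconn hdh s t w a b P hP ha hb
end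

section
/- In a distance-hereditary graph G, for two vertices s and t, if S_i(s,t) and S_{i+1}(s,t) are two consecutive slices of the interval I(s,t), then every vertex in S_i(s,t) is adjacent to every vertex in S_{i+1}(s,t). -/
/-!
Concatenate geodesics `s ⟶ w₁`, `w₁ ⟶ t` and `w₂ ⟶ t` into one walk. Its vertex set induces a
connected subgraph, so by distance-heredity `w₂` has a neighbour `n` on the walk with
`d(s, n) ≤ i`. A vertex of the geodesic `w₂ ⟶ t` other than `w₂` that close to `s` would shorten
`d(s, t)`, and the only vertex of `I(s, w₁) ∪ I(w₁, t)` that close to `s` is `w₁`. Hence `n = w₁`.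
-/

open SimpleGraph

variable {V : Type*}

namespace SimpleGraph

variable {G : SimpleGraph V}

theorem Walk.mem_interval_of_mem_support {a b v : V} {p : G.Walk a b}
    (hp : p.length = G.dist a b) (hv : v ∈ p.support) : v ∈ interval G a b := by
  classical
  have htake := length_eq_dist_of_subwalk hp (p.isSubwalk_takeUntil hv)
  have hdrop := length_eq_dist_of_subwalk hp (p.isSubwalk_dropUntil hv)
  change G.dist a b = G.dist a v + G.dist v b
  rw [← htake, ← hdrop, ← Walk.length_append, p.take_spec hv, hp]

theorem DistHereditary.exists_adj_dist_lt_of_mem_support (hdh : DistHereditary G)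
    {a b u v : V} (p : G.Walk a b) (hu : u ∈ p.support) (hv : v ∈ p.support) (huv : u ≠ v) :
    ∃ n ∈ p.support, G.Adj u n ∧ G.dist n v < G.dist u v := by
  set S : Set V := {x | x ∈ p.support}
  have hS : (G.induce S).Connected := p.connected_induce_support
  obtain ⟨W, hW⟩ := (hS.preconnected ⟨u, hu⟩ ⟨v, hv⟩).exists_walk_length_eq_dist
  have hWnil : ¬ W.Nil := fun h => huv (congrArg Subtype.val h.eq)
  refine ⟨W.snd.1, W.snd.2, W.adj_snd hWnil, ?_⟩
  calc G.dist W.snd.1 v ≤ (W.tail.map (Embedding.induce S).toHom).length := dist_le _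
    _ < W.length := by rw [Walk.length_map, ← W.length_tail_add_one hWnil]; omega
    _ = G.dist u v := by rw [hW, hdh S hS]

end SimpleGraph

theorem stmt_3_general {V : Type*} (G : SimpleGraph V) (hconn : G.Connected)
    (hdh : DistHereditary G) (s t : V) (i : ℕ) (w₁ w₂ : V)
    (hw₁ : w₁ ∈ interval G s t) (hw₁d : G.dist s w₁ = i)
    (hw₂ : w₂ ∈ interval G s t) (hw₂d : G.dist s w₂ = i + 1) :
    G.Adj w₁ w₂ := by
  obtain ⟨C, hC⟩ := hconn.exists_walk_length_eq_dist s w₁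
  obtain ⟨A, hA⟩ := hconn.exists_walk_length_eq_dist w₁ t
  obtain ⟨D, hD⟩ := hconn.exists_walk_length_eq_dist w₂ t
  have hw₂s : w₂ ≠ s := by rintro rfl; simp at hw₂d
  obtain ⟨n, hn, hadj, hns⟩ := hdh.exists_adj_dist_lt_of_mem_support
    ((C.append A).append D.reverse) (Walk.end_mem_support _) (Walk.start_mem_support _) hw₂s
  rw [dist_comm (u := n), dist_comm (u := w₂), hw₂d] at hns
  have hw₂n : G.dist w₂ n = 1 := dist_eq_one_iff_adj.mpr hadj
  have hnw₂ : G.dist n w₂ = 1 := dist_eq_one_iff_adj.mpr hadj.symm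
  have htri_w₂ := hconn.dist_triangle (u := s) (v := n) (w := w₂)
  have htri_t := hconn.dist_triangle (u := s) (v := n) (w := t)
  have hw₁_split : G.dist s t = _ := hw₁
  have hw₂_split : G.dist s t = _ := hw₂
  suffices G.dist w₁ n = 0 by rwa [← hconn.dist_eq_zero_iff.mp this, adj_comm] at hadj
  simp only [Walk.mem_support_append_iff, Walk.support_reverse, List.mem_reverse] at hn
  rcases hn with (hnC | hnA) | hnD
  · have hn_split : G.dist s w₁ = _ := Walk.mem_interval_of_mem_support hC hnC
    rw [dist_comm (u := n)] at hn_split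
    omega
  · have hn_split : G.dist w₁ t = _ := Walk.mem_interval_of_mem_support hA hnA
    omega
  · have hn_split : G.dist w₂ t = _ := Walk.mem_interval_of_mem_support hD hnD
    omega

theorem stmt_3 {V : Type*} [Fintype V] (G : SimpleGraph V) (hconn : G.Connected)
    (hdh : DistHereditary G) (s t : V) (i : ℕ) (w₁ w₂ : V)
    (hw₁ : w₁ ∈ interval G s t) (hw₁d : G.dist s w₁ = i)
    (hw₂ : w₂ ∈ interval G s t) (hw₂d : G.dist s w₂ = i + 1) :
    G.Adj w₁ w₂ :=
  stmt_3_general G hconn hdh s t i w₁ w₂ hw₁ hw₁d hw₂ hw₂d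
end

section
/- In a distance-hereditary graph G, for any pair of vertices s and t and any vertex v, if x is a vertex on a shortest path from v to its projection Π_v = Pr(v, I(s,t)) with d(x, Π_v) = 1, then every vertex of Π_v is adjacent to x. -/
open SimpleGraph

variable {V : Type*}

section DHAuxSection

variable {G : SimpleGraph V}

namespace DHAux

lemma getVert_mem_support {u v : V} (p : G.Walk u v) (i : ℕ) :
    p.getVert i ∈ p.support := by
  induction p generalizing i with
  | nil => simp [SimpleGraph.Walk.getVert]
  | cons h q ih =>
    cases i with
    | zero => simp [SimpleGraph.Walk.getVert]
    | succ n => simp [SimpleGraph.Walk.getVert, ih n]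

lemma dist_split [DecidableEq V] (hconn : G.Connected) {a b y : V} (P : G.Walk a b)
    (hP : P.length = G.dist a b) (hy : y ∈ P.support) :
    G.dist a y + G.dist y b = G.dist a b := by
  have h1 : G.dist a y ≤ (P.takeUntil y hy).length := SimpleGraph.dist_le _
  have h2 : G.dist y b ≤ (P.dropUntil y hy).length := SimpleGraph.dist_le _
  have h3 : (P.takeUntil y hy).length + (P.dropUntil y hy).length = P.length := by
    rw [← SimpleGraph.Walk.length_append, P.take_spec hy]
  have h4 : G.dist a b ≤ G.dist a y + G.dist y b := hconn.dist_triangle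
  omega

lemma reach_induce {S : Set V} {a b : V} (ha : a ∈ S) (hb : b ∈ S)
    (p : G.Walk a b) (hp : ∀ y ∈ p.support, y ∈ S) :
    (G.induce S).Reachable ⟨a, ha⟩ ⟨b, hb⟩ := by
  induction p with
  | nil => exact Reachable.refl _
  | @cons a' c b' h q ih =>
    have hc : c ∈ S := hp c (by simp)
    have hadj : (G.induce S).Adj ⟨a', ha⟩ ⟨c, hc⟩ := h
    exact hadj.reachable.trans (ih hc hb (fun y hy => hp y (by simp [hy])))

/-- The inclusion homomorphism from an induced subgraph. -/
def inclHom (S : Set V) : G.induce S →g G where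
  toFun := Subtype.val
  map_rel' := fun h => h

lemma dist_le_induce_dist {S : Set V} (a b : S) (hr : (G.induce S).Reachable a b) :
    G.dist a.1 b.1 ≤ (G.induce S).dist a b := by
  obtain ⟨r, hr⟩ := hr.exists_walk_length_eq_dist
  calc G.dist a.1 b.1 ≤ (r.map (inclHom S)).length := SimpleGraph.dist_le _
    _ = r.length := by simp
    _ = _ := hr

lemma key [DecidableEq V] (hconn : G.Connected) (hdh : DistHereditary G) {v z z' : V}
    (hadj : G.Adj z z') (h1 : 1 ≤ G.dist v z')
    (p : G.Walk v z) (_hp : p.length = G.dist v z) :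
    ∃ y ∈ p.support, G.Adj y z' ∧ G.dist v y + 1 = G.dist v z' := by
  set S : Set V := {y | y ∈ p.support ∨ y = z'} with hSdef
  have hvS : v ∈ S := Or.inl p.start_mem_support
  have hzS : z ∈ S := Or.inl p.end_mem_support
  have hz'S : z' ∈ S := Or.inr rfl
  have hsub : ∀ y ∈ p.support, y ∈ S := fun y hy => Or.inl hy
  have hadjI : (G.induce S).Adj ⟨z, hzS⟩ ⟨z', hz'S⟩ := hadj
  have hreachv : ∀ (c : V) (hc : c ∈ S), (G.induce S).Reachable ⟨v, hvS⟩ ⟨c, hc⟩ := by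
    intro c hc
    rcases hc with hc' | rfl
    · exact reach_induce hvS (Or.inl hc') (p.takeUntil c hc')
        (fun y hy => Or.inl (p.support_takeUntil_subset hc' hy))
    · exact (reach_induce hvS hzS p hsub).trans hadjI.reachable
  have hconnI : (G.induce S).Connected := by
    rw [connected_iff]
    refine ⟨fun a b => ?_, ⟨⟨v, hvS⟩⟩⟩
    obtain ⟨a, ha⟩ := a; obtain ⟨b, hb⟩ := b
    exact (hreachv a ha).symm.trans (hreachv b hb)
  have hdist : (G.induce S).dist ⟨v, hvS⟩ ⟨z', hz'S⟩ = G.dist v z' := hdh S hconnI _ _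
  obtain ⟨q, hq⟩ := hconnI.exists_walk_length_eq_dist ⟨v, hvS⟩ ⟨z', hz'S⟩
  have hn : q.length = G.dist v z' := by rw [hq, hdist]
  have hn1 : 1 ≤ q.length := by omega
  set y' : S := q.getVert (q.length - 1) with hy'def
  have hyadjI : (G.induce S).Adj y' ⟨z', hz'S⟩ := by
    have h2 : q.length - 1 + 1 = q.length := by omega
    have := q.adj_getVert_succ (i := q.length - 1) (by omega)
    rw [h2, SimpleGraph.Walk.getVert_length] at this
    exact this
  have hymem : y' ∈ q.support := getVert_mem_support q _
  have hsplit := dist_split hconnI q hq hymem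
  have hd1 : (G.induce S).dist y' ⟨z', hz'S⟩ = 1 := dist_eq_one_iff_adj.mpr hyadjI
  have hdy : G.dist v y'.1 ≤ (G.induce S).dist ⟨v, hvS⟩ y' :=
    dist_le_induce_dist _ _ (hreachv y'.1 y'.2)
  have hadjG : G.Adj y'.1 z' := hyadjI
  have hlow : G.dist v z' ≤ G.dist v y'.1 + 1 := by
    have hd2 : G.dist y'.1 z' = 1 := dist_eq_one_iff_adj.mpr hadjG
    have := hconn.dist_triangle (u := v) (v := y'.1) (w := z')
    omega
  have hymemp : y'.1 ∈ p.support := by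
    rcases y'.2 with h | h
    · exact h
    · exact absurd (h ▸ hadjG) (G.irrefl)
  exact ⟨y'.1, hymemp, hadjG, by omega⟩

lemma adj_dist_le_one {a b : V} (h : G.Adj a b) : G.dist a b ≤ 1 :=
  le_of_eq (dist_eq_one_iff_adj.mpr h)

lemma step [DecidableEq V] (hconn : G.Connected) (hdh : DistHereditary G) {v x a c : V}
    (hadj : G.Adj a c) (hc : G.dist v x + 1 ≤ G.dist v c)
    (hxa : G.dist v x + G.dist x a = G.dist v a) :
    G.dist v x + G.dist x c = G.dist v c := by
  have hlb : G.dist v c ≤ G.dist v x + G.dist x c := hconn.dist_triangle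
  have hub : G.dist v c ≤ G.dist v a + 1 := by
    have := hconn.dist_triangle (u := v) (v := a) (w := c)
    have := adj_dist_le_one hadj
    omega
  rcases le_or_gt (G.dist v c) (G.dist v a) with hle | hgt
  · obtain ⟨P₁, hP₁⟩ := hconn.exists_walk_length_eq_dist v x
    obtain ⟨P₂, hP₂⟩ := hconn.exists_walk_length_eq_dist x a
    have hp : (P₁.append P₂).length = G.dist v a := by
      rw [SimpleGraph.Walk.length_append, hP₁, hP₂, hxa]
    obtain ⟨y, hy, hyadj, hyd⟩ := key hconn hdh hadj (by omega) (P₁.append P₂) hp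
    have hyc : G.dist y c ≤ 1 := adj_dist_le_one hyadj
    have hxc : G.dist x c ≤ G.dist x y + G.dist y c := hconn.dist_triangle
    have hxy : G.dist x y + (G.dist v x + 1) ≤ G.dist v c := by
      rcases (SimpleGraph.Walk.mem_support_append_iff _ _).mp hy with h1 | h2
      · have hs := dist_split hconn P₁ hP₁ h1
        have hcm : G.dist y x = G.dist x y := SimpleGraph.dist_comm ..
        omega
      · have hs := dist_split hconn P₂ hP₂ h2
        have htr : G.dist v a ≤ G.dist v y + G.dist y a := hconn.dist_triangle
        omega
    omega
  · have h2 : G.dist x c ≤ G.dist x a + G.dist a c := hconn.dist_triangle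
    have h3 := adj_dist_le_one hadj
    omega

lemma walk_prop [DecidableEq V] (hconn : G.Connected) (hdh : DistHereditary G) {v x : V} :
    ∀ {a b : V} (W : G.Walk a b), (∀ y ∈ W.support, G.dist v x + 1 ≤ G.dist v y) →
      G.dist v x + G.dist x a = G.dist v a → G.dist v x + G.dist x b = G.dist v b := by
  intro a b W
  induction W with
  | nil => exact fun _ h => h
  | @cons a' c b' h q ih =>
    intro hsup ha
    exact ih (fun y hy => hsup y (by simp [hy]))
      (step hconn hdh h (hsup c (by simp)) ha)

end DHAux

end DHAuxSection

theorem stmt_4 {V : Type*} [Fintype V] (G : SimpleGraph V) (hconn : G.Connected)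
    (hdh : DistHereditary G) (s t v x : V)
    (hx : setDist G v (proj G v (interval G s t)) =
      G.dist v x + setDist G x (proj G v (interval G s t)))
    (hx1 : setDist G x (proj G v (interval G s t)) = 1) :
    ∀ u ∈ proj G v (interval G s t), G.Adj x u := by
  classical
  intro u hu
  have hne : (proj G v (interval G s t)).Nonempty := by
    by_contra h
    rw [Set.not_nonempty_iff_eq_empty] at h
    rw [h] at hx1
    simp [setDist] at hx1
  have him : (G.dist x '' proj G v (interval G s t)).Nonempty := hne.image _
  have hw'' : (1 : ℕ) ∈ G.dist x '' proj G v (interval G s t) := by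
    rw [← hx1]; exact Nat.sInf_mem him
  obtain ⟨w, hwP, hw1⟩ := hw''
  have himv : (G.dist v '' proj G v (interval G s t)).Nonempty := hne.image _
  have hKey : setDist G v (proj G v (interval G s t)) = setDist G v (interval G s t) := by
    obtain ⟨u0, hu0P, hu0d⟩ := Nat.sInf_mem himv
    calc setDist G v (proj G v (interval G s t)) = G.dist v u0 := hu0d.symm
      _ = setDist G v (interval G s t) := hu0P.2
  have hK : setDist G v (interval G s t) = G.dist v x + 1 := by
    rw [← hKey, hx, hx1]
  have hmin : ∀ z ∈ interval G s t, G.dist v x + 1 ≤ G.dist v z := by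
    intro z hz
    have h1 : setDist G v (interval G s t) ≤ G.dist v z := Nat.sInf_le ⟨z, hz, rfl⟩
    omega
  obtain ⟨Q₁, hQ₁⟩ := hconn.exists_walk_length_eq_dist w s
  obtain ⟨Q₂, hQ₂⟩ := hconn.exists_walk_length_eq_dist s u
  have hWsup : ∀ y ∈ (Q₁.append Q₂).support, G.dist v x + 1 ≤ G.dist v y := by
    intro y hy
    apply hmin
    have htri : G.dist s t ≤ G.dist s y + G.dist y t := hconn.dist_triangle
    rcases (Walk.mem_support_append_iff _ _).mp hy with h1 | h2
    · have hs := DHAux.dist_split hconn Q₁ hQ₁ h1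
      have ht2 : G.dist y t ≤ G.dist y w + G.dist w t := hconn.dist_triangle
      have hwI : G.dist s t = G.dist s w + G.dist w t := hwP.1
      have c1 : G.dist s y = G.dist y s := G.dist_comm
      have c2 : G.dist y w = G.dist w y := G.dist_comm
      have c3 : G.dist s w = G.dist w s := G.dist_comm
      show G.dist s t = G.dist s y + G.dist y t
      omega
    · have hs := DHAux.dist_split hconn Q₂ hQ₂ h2
      have ht2 : G.dist y t ≤ G.dist y u + G.dist u t := hconn.dist_triangle
      have huI : G.dist s t = G.dist s u + G.dist u t := hu.1
      show G.dist s t = G.dist s y + G.dist y t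
      omega
  have hbase : G.dist v x + G.dist x w = G.dist v w := by
    rw [hw1, hwP.2, hK]
  have hfin := DHAux.walk_prop hconn hdh (Q₁.append Q₂) hWsup hbase
  have hvu : G.dist v u = G.dist v x + 1 := by rw [hu.2, hK]
  have hxu : G.dist x u = 1 := by omega
  exact dist_eq_one_iff_adj.mp hxu
end

section
/- In a distance-hereditary graph G, if the projection Π_v = Pr(v, I(s,t)) of a vertex v onto the interval I(s,t) intersects two distinct slices of I(s,t), then every shortest path from s to t contains a vertex of Π_v. -/
open SimpleGraph

variable {V : Type*}

/-!
Let `k = d(v, I(s,t))`, let `d(s,p) < d(s,q)`, and let `P` be a geodesic from `s` to `t`.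
Follow geodesics `v ⇝ p ⇝ s` and then `P`; since `G` is distance-hereditary, the support of
this walk contains a geodesic `R` from `v` to `t`. Its vertex `y` at distance `k` from `v`
lies in the `v ⇝ p ⇝ s` part or on `P`. In the first case `y ∈ I(s,t)` and
`d(s,y) ≤ d(s,p) < d(s,q)`, so `d(y,t) > d(q,t)` and `d(v,t) = k + d(y,t) > d(v,q) + d(q,t)`,
which is impossible. Hence `y ∈ P` and `y ∈ Π_v`.
-/

namespace SimpleGraph

variable {G : SimpleGraph V}

lemma Walk.mem_interval_of_length_eq_dist {a b x : V} (w : G.Walk a b)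
    (hw : w.length = G.dist a b) (hx : x ∈ w.support) : x ∈ interval G a b := by
  classical
  have hsplit := (w.take_spec hx).symm
  have htake := length_eq_dist_of_subwalk hw (isSubwalk_of_append_left hsplit)
  have hdrop := length_eq_dist_of_subwalk hw (isSubwalk_of_append_right hsplit)
  have hlen := congrArg Walk.length hsplit
  rw [Walk.length_append] at hlen
  change G.dist a b = G.dist a x + G.dist x b
  omega

lemma Walk.dist_getVert_of_length_eq_dist {a b : V} (w : G.Walk a b)
    (hw : w.length = G.dist a b) {n : ℕ} (hn : n ≤ w.length) : G.dist a (w.getVert n) = n := by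
  rw [← length_eq_dist_of_subwalk hw (w.isSubwalk_take n), Walk.take_length]
  exact min_eq_left hn

lemma setDist_le {S : Set V} {x w : V} (hw : w ∈ S) : setDist G x S ≤ G.dist x w :=
  Nat.sInf_le ⟨w, hw, rfl⟩

lemma Connected.interval_subset_interval (hconn : G.Connected) {s t p : V}
    (hp : p ∈ interval G s t) : interval G s p ⊆ interval G s t := fun x hx => by
  have hxt : G.dist x t ≤ G.dist x p + G.dist p t := hconn.dist_triangle
  have hst : G.dist s t ≤ G.dist s x + G.dist x t := hconn.dist_triangle
  change G.dist s t = G.dist s x + G.dist x t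
  change G.dist s p = G.dist s x + G.dist x p at hx
  change G.dist s t = G.dist s p + G.dist p t at hp
  omega

lemma Connected.dist_le_of_mem_interval (hconn : G.Connected) {s t v y q : V}
    (hy : y ∈ interval G s t) (hq : q ∈ interval G s t) (hyv : y ∈ interval G v t)
    (hvq : G.dist v q ≤ G.dist v y) : G.dist s q ≤ G.dist s y := by
  have hvt : G.dist v t ≤ G.dist v q + G.dist q t := hconn.dist_triangle
  change G.dist s t = G.dist s y + G.dist y t at hy
  change G.dist s t = G.dist s q + G.dist q t at hq
  change G.dist v t = G.dist v y + G.dist y t at hyv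
  omega

lemma DistHereditary.exists_walk_length_eq_dist_support_subset (hdh : DistHereditary G)
    {a b : V} (w : G.Walk a b) :
    ∃ r : G.Walk a b, r.length = G.dist a b ∧ r.support ⊆ w.support := by
  let S : Set V := {x | x ∈ w.support}
  have hS : (G.induce S).Connected := w.connected_induce_support
  let a' : S := ⟨a, w.start_mem_support⟩
  let b' : S := ⟨b, w.end_mem_support⟩
  obtain ⟨r, hr⟩ := hS.exists_walk_length_eq_dist a' b'
  refine ⟨r.map (Embedding.induce S).toHom, ?_, ?_⟩
  · exact (Walk.length_map _ _).trans (hr.trans (hdh S hS a' b'))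
  · intro x hx
    have hx : x ∈ r.support.map (Embedding.induce (G := G) S).toHom := by rwa [← Walk.support_map]
    obtain ⟨y, -, rfl⟩ := List.mem_map.mp hx
    exact y.2

lemma exists_mem_support_mem_proj_of_dist_lt (hconn : G.Connected) (hdh : DistHereditary G)
    {s t v p q : V} (hp : p ∈ proj G v (interval G s t)) (hq : q ∈ proj G v (interval G s t))
    (hpq : G.dist s p < G.dist s q) (P : G.Walk s t) (hP : P.length = G.dist s t) :
    ∃ z ∈ P.support, z ∈ proj G v (interval G s t) := by
  set I := interval G s t
  set k := setDist G v I
  obtain ⟨hpI, hpk⟩ := hp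
  obtain ⟨hqI, hqk⟩ := hq
  obtain ⟨A, hA⟩ := hconn.exists_walk_length_eq_dist v p
  obtain ⟨B, hB⟩ := hconn.exists_walk_length_eq_dist s p
  obtain ⟨R, hR, hRW⟩ :=
    hdh.exists_walk_length_eq_dist_support_subset (A.append (B.reverse.append P))
  have htI : t ∈ I := P.mem_interval_of_length_eq_dist hP P.end_mem_support
  have hkR : k ≤ R.length := hR ▸ setDist_le htI
  set y := R.getVert k
  have hyk : G.dist v y = k := R.dist_getVert_of_length_eq_dist hR hkR
  have hyvt : y ∈ interval G v t := R.mem_interval_of_length_eq_dist hR (R.getVert_mem_support k)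
  have hfar_from_s : y ∈ I → G.dist s y ≤ G.dist s p → False := fun hyI hsy =>
    absurd (hconn.dist_le_of_mem_interval hyI hqI hyvt (by rw [hqk, hyk])) (by omega)
  have hy := hRW (R.getVert_mem_support k)
  simp only [Walk.mem_support_append_iff, Walk.support_reverse, List.mem_reverse] at hy
  rcases hy with hyA | hyB | hyP
  · have hyvp : G.dist v p = G.dist v y + G.dist y p := A.mem_interval_of_length_eq_dist hA hyA
    have hyp : y = p := hconn.dist_eq_zero_iff.mp (by omega)
    exact (hfar_from_s (hyp ▸ hpI) (by rw [hyp])).elim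
  · have hysp : y ∈ interval G s p := B.mem_interval_of_length_eq_dist hB hyB
    exact (hfar_from_s (hconn.interval_subset_interval hpI hysp) (by
      change G.dist s p = G.dist s y + G.dist y p at hysp; omega)).elim
  · exact ⟨y, hyP, P.mem_interval_of_length_eq_dist hP hyP, hyk⟩

end SimpleGraph

theorem stmt_5_general {V : Type*} (G : SimpleGraph V) (hconn : G.Connected)
    (hdh : DistHereditary G) (s t v : V) (p q : V)
    (hp : p ∈ proj G v (interval G s t)) (hq : q ∈ proj G v (interval G s t))
    (hpq : G.dist s p ≠ G.dist s q) :
    ∀ (P : G.Walk s t), IsShortestPath G P →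
      ∃ z ∈ P.support, z ∈ proj G v (interval G s t) := by
  intro P hP
  rcases hpq.lt_or_gt with hlt | hgt
  · exact exists_mem_support_mem_proj_of_dist_lt hconn hdh hp hq hlt P hP.2
  · exact exists_mem_support_mem_proj_of_dist_lt hconn hdh hq hp hgt P hP.2

theorem stmt_5 {V : Type*} [Fintype V] (G : SimpleGraph V) (hconn : G.Connected)
    (hdh : DistHereditary G) (s t v : V) (p q : V)
    (hp : p ∈ proj G v (interval G s t)) (hq : q ∈ proj G v (interval G s t))
    (hpq : G.dist s p ≠ G.dist s q) :
    ∀ (P : G.Walk s t), IsShortestPath G P →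
      ∃ z ∈ P.support, z ∈ proj G v (interval G s t) :=
  stmt_5_general G hconn hdh s t v p q hp hq hpq
end

section
/- Let G be a distance-hereditary graph with diametral pair x, y and let k be the minimum eccentricity of a shortest path in G. If some shortest path P between x and y has ecc(P) > k, then d(x,y) ≥ 2k. -/
open SimpleGraph

variable {V : Type*}

section Aux

variable {G : SimpleGraph V}

lemma walk_of_induce {S : Set V} : ∀ {a b : S} (p : (G.induce S).Walk a b),
    ∃ q : G.Walk a.1 b.1, q.length = p.length ∧ ∀ s ∈ q.support, s ∈ S := by
  intro a b p
  induction p with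
  | nil => exact ⟨Walk.nil, rfl, by rintro s hs; simp at hs; subst hs; exact Subtype.prop _⟩
  | @cons a c b h q ih =>
    obtain ⟨q', hlen, hsub⟩ := ih
    refine ⟨Walk.cons (by simpa using h) q', by simp [hlen], ?_⟩
    intro s hs
    rcases (by simpa using hs : s = a.1 ∨ s ∈ q'.support) with rfl | hs
    · exact a.2
    · exact hsub s hs

lemma reach_induce {S : Set V} : ∀ {a b : V} (p : G.Walk a b)
    (hs : ∀ s ∈ p.support, s ∈ S) (ha : a ∈ S) (hb : b ∈ S),
    (G.induce S).Reachable ⟨a, ha⟩ ⟨b, hb⟩ := by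
  intro a b p
  induction p with
  | nil => intro _ _ _; exact Reachable.refl _
  | @cons a c b h q ih =>
    intro hs ha hb
    have hc : c ∈ S := hs c (by simp)
    have h1 : (G.induce S).Adj ⟨a, ha⟩ ⟨c, hc⟩ := by simpa using h
    exact h1.reachable.trans (ih (fun s hsup => hs s (by simp [hsup])) hc hb)

/-- On a shortest walk, distances from the endpoints are additive at every support vertex. -/
lemma dist_add_of_mem [DecidableEq V] (hc : G.Connected) {a b u : V} (t : G.Walk a b)
    (ht : t.length = G.dist a b) (hu : u ∈ t.support) :
    G.dist a u + G.dist u b = G.dist a b ∧ (t.takeUntil u hu).length = G.dist a u ∧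
      (t.dropUntil u hu).length = G.dist u b := by
  have h1 : G.dist a u ≤ (t.takeUntil u hu).length := dist_le _
  have h2 : G.dist u b ≤ (t.dropUntil u hu).length := dist_le _
  have h3 : (t.takeUntil u hu).length + (t.dropUntil u hu).length = t.length := by
    have := congrArg Walk.length (t.take_spec hu)
    rwa [Walk.length_append] at this
  have h4 : G.dist a b ≤ G.dist a u + G.dist u b := hc.dist_triangle
  omega

/-- A shortest walk visits at most one vertex at any given distance from the start. -/
lemma unique_on_shortest [DecidableEq V] (hc : G.Connected) {a b u u' : V} (t : G.Walk a b)
    (ht : t.length = G.dist a b) (hu : u ∈ t.support) (hu' : u' ∈ t.support)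
    (hd : G.dist a u = G.dist a u') : u = u' := by
  obtain ⟨hadd, hta, htd⟩ := dist_add_of_mem hc t ht hu
  rw [← t.take_spec hu, Walk.mem_support_append_iff] at hu'
  rcases hu' with hu' | hu'
  · obtain ⟨hadd', -, -⟩ := dist_add_of_mem hc (t.takeUntil u hu) hta hu'
    have : G.dist u' u = 0 := by omega
    exact ((hc u' u).dist_eq_zero_iff.mp this).symm
  · obtain ⟨hadd', -, -⟩ := dist_add_of_mem hc (t.dropUntil u hu) htd hu'
    have h5 : G.dist a u' + G.dist u' b = G.dist a b :=
      (dist_add_of_mem hc t ht (t.support_dropUntil_subset hu hu')).1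
    have : G.dist u u' = 0 := by omega
    exact (hc u u').dist_eq_zero_iff.mp this

/-- Crossing lemma: a walk from outside `A` into `A` has a crossing edge. -/
lemma crossing {A : Set V} : ∀ {v x : V} (t : G.Walk v x), x ∈ A → v ∉ A →
    ∃ (u z : V) (t1 : G.Walk v u) (t2 : G.Walk z x), G.Adj u z ∧ u ∉ A ∧ z ∈ A ∧
      u ∈ t.support ∧ z ∈ t.support ∧ t1.length + 1 + t2.length = t.length := by
  intro v x t
  induction t with
  | nil => intro hx hv; exact absurd hx hv
  | @cons v c x h q ih =>
    intro hx hv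
    by_cases hcA : c ∈ A
    · exact ⟨v, c, Walk.nil, q, h, hv, hcA, by simp, by simp, by simp; omega⟩
    · obtain ⟨u, z, t1, t2, hadj, huA, hzA, hus, hzs, hlen⟩ := ih hx hcA
      exact ⟨u, z, Walk.cons h t1, t2, hadj, huA, hzA, by simp [hus], by simp [hzs],
        by simp at hlen ⊢; omega⟩

end Aux

theorem stmt_8 {V : Type*} [Fintype V] (G : SimpleGraph V) (hconn : G.Connected)
    (hdh : DistHereditary G) (x y : V) (hdiam : G.dist x y = diamG G) (k : ℕ)
    (hk : ∃ (a b : V) (Q : G.Walk a b), IsShortestPath G Q ∧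
      eccSet G {v | v ∈ Q.support} = k)
    (hkmin : ∀ (a b : V) (Q : G.Walk a b), IsShortestPath G Q →
      k ≤ eccSet G {v | v ∈ Q.support})
    (P : G.Walk x y) (hP : IsShortestPath G P)
    (hPecc : k < eccSet G {v | v ∈ P.support}) :
    2 * k ≤ G.dist x y := by
  classical
  rcases Nat.eq_zero_or_pos k with rfl | hkpos
  · omega
  -- a vertex far from P
  have hPecc' : k < Finset.univ.sup (fun v => setDist G v {s | s ∈ P.support}) := hPecc
  obtain ⟨v, -, hv⟩ := Finset.lt_sup_iff.mp hPecc'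
  set Pset : Set V := {s | s ∈ P.support} with hPsetdef
  set m := setDist G v Pset with hmdef
  have hm_le : ∀ z ∈ Pset, m ≤ G.dist v z := fun z hz => Nat.sInf_le ⟨z, hz, rfl⟩
  have hx_mem : x ∈ Pset := P.start_mem_support
  have hy_mem : y ∈ Pset := P.end_mem_support
  have hv_notP : v ∉ Pset := by
    intro h
    have := hm_le v h
    rw [SimpleGraph.dist_self] at this
    omega
  -- nearest vertex w of P
  have hm_mem : m ∈ G.dist v '' Pset := Nat.sInf_mem ⟨G.dist v x, x, hx_mem, rfl⟩
  obtain ⟨w, hw_mem, hw⟩ := hm_mem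
  -- a shortest walk R from v to w
  obtain ⟨R, hR⟩ := (hconn v w).exists_walk_length_eq_dist
  have hRlen : R.length = G.dist v w := hR
  -- the induced set S
  set S : Set V := {s | s ∈ P.support ∨ s ∈ R.support} with hSdef
  have hyS : y ∈ S := Or.inl hy_mem
  have hvS : v ∈ S := Or.inr R.start_mem_support
  have hxS : x ∈ S := Or.inl hx_mem
  have hwP : w ∈ P.support := hw_mem
  have hS_reach : ∀ s (hs : s ∈ S), (G.induce S).Reachable ⟨s, hs⟩ ⟨y, hyS⟩ := by
    have hPy : ∀ s (hsP : s ∈ P.support), (G.induce S).Reachable ⟨s, Or.inl hsP⟩ ⟨y, hyS⟩ := by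
      intro s hsP
      exact reach_induce (P.dropUntil s hsP)
        (fun t ht => Or.inl (P.support_dropUntil_subset hsP ht)) (Or.inl hsP) hyS
    intro s hs
    rcases hs with hsP | hsR
    · exact hPy s hsP
    · have h1 : (G.induce S).Reachable ⟨s, Or.inr hsR⟩ ⟨w, Or.inr R.end_mem_support⟩ :=
        reach_induce (R.dropUntil s hsR)
          (fun t ht => Or.inr (R.support_dropUntil_subset hsR ht)) (Or.inr hsR)
          (Or.inr R.end_mem_support)
      exact h1.trans (hPy w hwP)
  have hSconn : (G.induce S).Connected := by
    rw [connected_iff]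
    exact ⟨fun a b => (hS_reach a.1 a.2).trans (hS_reach b.1 b.2).symm, ⟨⟨y, hyS⟩⟩⟩
  -- a shortest v-x walk inside S
  have hdvx : (G.induce S).dist ⟨v, hvS⟩ ⟨x, hxS⟩ = G.dist v x := hdh S hSconn _ _
  obtain ⟨Ti, hTi⟩ := (hSconn ⟨v, hvS⟩ ⟨x, hxS⟩).exists_walk_length_eq_dist
  obtain ⟨T, hTlen, hTsub⟩ := walk_of_induce Ti
  have hT : T.length = G.dist v x := by rw [hTlen, hTi, hdvx]
  -- a shortest v-y walk inside S
  have hdvy : (G.induce S).dist ⟨v, hvS⟩ ⟨y, hyS⟩ = G.dist v y := hdh S hSconn _ _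
  obtain ⟨Ti', hTi'⟩ := (hSconn ⟨v, hvS⟩ ⟨y, hyS⟩).exists_walk_length_eq_dist
  obtain ⟨T', hTlen', hTsub'⟩ := walk_of_induce Ti'
  have hT' : T'.length = G.dist v y := by rw [hTlen', hTi', hdvy]
  -- crossing analysis for T
  obtain ⟨u1, z1, t1, t2, hadj1, hu1A, hz1A, hu1T, hz1T, hlen1⟩ := crossing T hx_mem hv_notP
  obtain ⟨u2, z2, s1, s2, hadj2, hu2A, hz2A, hu2T, hz2T, hlen2⟩ := crossing T' hy_mem hv_notP
  -- distances along T
  have d1 : G.dist v u1 ≤ t1.length := dist_le _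
  have d2 : G.dist z1 x ≤ t2.length := dist_le _
  have d3 : G.dist u1 z1 ≤ 1 := by
    have := dist_le (Walk.cons hadj1 Walk.nil)
    simpa using this
  have tri1 : G.dist v x ≤ G.dist v u1 + G.dist u1 x := hconn.dist_triangle
  have tri2 : G.dist u1 x ≤ G.dist u1 z1 + G.dist z1 x := hconn.dist_triangle
  have E1 : G.dist v u1 + 1 + G.dist z1 x = G.dist v x := by omega
  -- distances along T'
  have d1' : G.dist v u2 ≤ s1.length := dist_le _
  have d2' : G.dist z2 y ≤ s2.length := dist_le _
  have d3' : G.dist u2 z2 ≤ 1 := by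
    have := dist_le (Walk.cons hadj2 Walk.nil)
    simpa using this
  have tri1' : G.dist v y ≤ G.dist v u2 + G.dist u2 y := hconn.dist_triangle
  have tri2' : G.dist u2 y ≤ G.dist u2 z2 + G.dist z2 y := hconn.dist_triangle
  have E2 : G.dist v u2 + 1 + G.dist z2 y = G.dist v y := by omega
  -- u1, u2 lie on R
  have hu1R : u1 ∈ R.support := by
    rcases hTsub u1 hu1T with h | h
    · exact absurd h hu1A
    · exact h
  have hu2R : u2 ∈ R.support := by
    rcases hTsub' u2 hu2T with h | h
    · exact absurd h hu2A
    · exact h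
  have addR1 : G.dist v u1 + G.dist u1 w = G.dist v w := (dist_add_of_mem hconn R hRlen hu1R).1
  have addR2 : G.dist v u2 + G.dist u2 w = G.dist v w := (dist_add_of_mem hconn R hRlen hu2R).1
  have hu1w : 0 < G.dist u1 w := hconn.pos_dist_of_ne (fun h => hu1A (h ▸ hw_mem))
  have hu2w : 0 < G.dist u2 w := hconn.pos_dist_of_ne (fun h => hu2A (h ▸ hw_mem))
  have hmz1 : m ≤ G.dist v z1 := hm_le z1 hz1A
  have hmz2 : m ≤ G.dist v z2 := hm_le z2 hz2A
  have triz1 : G.dist v z1 ≤ G.dist v u1 + G.dist u1 z1 := hconn.dist_triangle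
  have triz2 : G.dist v z2 ≤ G.dist v u2 + G.dist u2 z2 := hconn.dist_triangle
  have hvu1 : G.dist v u1 + 1 = m := by omega
  have hvu2 : G.dist v u2 + 1 = m := by omega
  -- u1 = u2
  have huu : u1 = u2 := unique_on_shortest hconn R hRlen hu1R hu2R (by omega)
  subst huu
  -- z1 and z2 are close
  have hz1u : G.dist z1 u1 = G.dist u1 z1 := SimpleGraph.dist_comm ..
  have triz : G.dist z1 z2 ≤ G.dist z1 u1 + G.dist u1 z2 := hconn.dist_triangle
  have hzz : G.dist z1 z2 ≤ 2 := by omega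
  -- additivity on P
  have addP1 : G.dist x z1 + G.dist z1 y = G.dist x y := (dist_add_of_mem hconn P hP.2 hz1A).1
  have addP2 : G.dist x z2 + G.dist z2 y = G.dist x y := (dist_add_of_mem hconn P hP.2 hz2A).1
  have trix : G.dist x z2 ≤ G.dist x z1 + G.dist z1 z2 := hconn.dist_triangle
  -- v is within diameter of x and y
  have hvx_le : G.dist v x ≤ G.dist x y := by
    have h1 : G.dist x v ≤ eccV G x := Finset.le_sup (f := fun u => G.dist x u) (Finset.mem_univ v)
    have h2 : eccV G x ≤ diamG G := Finset.le_sup (f := fun u => eccV G u) (Finset.mem_univ x)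
    have h3 : G.dist v x = G.dist x v := SimpleGraph.dist_comm ..
    rw [hdiam]
    omega
  have hvy_le : G.dist v y ≤ G.dist x y := by
    have h1 : G.dist y v ≤ eccV G y := Finset.le_sup (f := fun u => G.dist y u) (Finset.mem_univ v)
    have h2 : eccV G y ≤ diamG G := Finset.le_sup (f := fun u => eccV G u) (Finset.mem_univ y)
    have h3 : G.dist v y = G.dist y v := SimpleGraph.dist_comm ..
    rw [hdiam]
    omega
  have hc1 : G.dist z1 x = G.dist x z1 := SimpleGraph.dist_comm ..
  omega
end

section
/- Let G be a graph with projection gap γ, let P be a shortest path starting in s, Q a subpath of P with more than γ vertices, u and w vertices of P outside Q with d(s,u) < d(s,Q) < d(s,w), and x an arbitrary vertex. If d(x,u) < d(x,Q), then d(x,w) ≥ d(x,Q). -/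
open SimpleGraph

variable {V : Type*}

/-- `pg(G) ≤ γ`: for every shortest path `P` starting at `s`, every vertex `x`, and any two
vertices `u, w` of the projection of `x` on `P` with `d(u,w) > γ+1`, some vertex of the
projection lies strictly between them on `P` (positions on `P` equal distances from `s`). -/
def ProjGapLE (G : SimpleGraph V) (γ : ℕ) : Prop :=
  ∀ (s t : V) (p : G.Walk s t), IsShortestPath G p →
    ∀ (x u w : V), u ∈ proj G x {v | v ∈ p.support} → w ∈ proj G x {v | v ∈ p.support} →
      G.dist s u < G.dist s w → γ + 1 < G.dist u w →
      ∃ z ∈ proj G x {v | v ∈ p.support},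
        G.dist s u < G.dist s z ∧ G.dist s z < G.dist s w

namespace ProjGapAux

variable {G : SimpleGraph V} {s t : V}

def seg (p : G.Walk s t) : (k i : ℕ) → i + k ≤ p.length → G.Walk (p.getVert i) (p.getVert (i + k))
  | 0, i, _ => Walk.nil.copy rfl (by rw [Nat.add_zero])
  | (k+1), i, h =>
      Walk.cons (p.adj_getVert_succ (by omega))
        ((seg p k (i+1) (by omega)).copy rfl (congrArg p.getVert (by omega)))

lemma seg_length (p : G.Walk s t) (k i : ℕ) (h : i + k ≤ p.length) :
    (seg p k i h).length = k := by
  induction k generalizing i with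
  | zero => simp [seg]
  | succ k ih => simp [seg, ih]

lemma seg_getVert (p : G.Walk s t) (k i : ℕ) (h : i + k ≤ p.length) (m : ℕ) :
    (seg p k i h).getVert m = p.getVert (i + min m k) := by
  induction k generalizing i m with
  | zero =>
      rw [seg]
      rw [Walk.getVert_copy]
      rw [Walk.getVert_of_length_le _ (by simp : (Walk.nil : G.Walk (p.getVert i) (p.getVert i)).length ≤ m)]
      simp
  | succ k ih =>
      cases m with
      | zero => rw [seg]; simp
      | succ m =>
          rw [seg]
          rw [Walk.getVert_cons_succ, Walk.getVert_copy, ih]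
          congr 1
          omega

lemma dist_getVert (hconn : G.Connected) (p : G.Walk s t) (hp : IsShortestPath G p)
    {i j : ℕ} (hij : i ≤ j) (hj : j ≤ p.length) :
    G.dist (p.getVert i) (p.getVert j) = j - i := by
  have hle : ∀ i j : ℕ, i ≤ j → j ≤ p.length →
      G.dist (p.getVert i) (p.getVert j) ≤ j - i := by
    intro i j hij hj
    calc G.dist (p.getVert i) (p.getVert j)
        ≤ ((seg p (j - i) i (by omega)).copy rfl (congrArg p.getVert (by omega))).length :=
          dist_le _
      _ = j - i := by rw [Walk.length_copy, seg_length]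
  have h1 := hle 0 i (Nat.zero_le _) (le_trans hij hj)
  have h2 := hle i j hij hj
  have h3 := hle j p.length hj le_rfl
  rw [p.getVert_zero] at h1
  rw [p.getVert_length] at h3
  have t4 := hconn.dist_triangle (u := s) (v := p.getVert i) (w := t)
  have t3 := hconn.dist_triangle (u := p.getVert i) (v := p.getVert j) (w := t)
  have hn := hp.2
  omega

end ProjGapAux


open ProjGapAux in
theorem stmt_9 {V : Type*} [Fintype V] (G : SimpleGraph V) (hconn : G.Connected)
    (γ : ℕ) (hγ : ProjGapLE G γ) (s t : V) (p : G.Walk s t) (hp : IsShortestPath G p)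
    (a b : ℕ) (hab : a ≤ b) (Q : Set V)
    (hQ : Q = {v | v ∈ p.support ∧ a ≤ G.dist s v ∧ G.dist s v ≤ b})
    (hsize : γ < b + 1 - a) (u w : V)
    (hu : u ∈ p.support) (hunQ : u ∉ Q) (hw : w ∈ p.support) (hwnQ : w ∉ Q)
    (huQ : G.dist s u < setDist G s Q) (hQw : setDist G s Q < G.dist s w)
    (x : V) (hx : G.dist x u < setDist G x Q) :
    setDist G x Q ≤ G.dist x w := by
  by_contra hcon
  push_neg at hcon
  -- generic facts about setDist
  have hsetle : ∀ (y : V) (S : Set V) (v : V), v ∈ S → setDist G y S ≤ G.dist y v := by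
    intro y S v hv
    exact Nat.sInf_le ⟨v, hv, rfl⟩
  have hsetmem : ∀ (y : V) (S : Set V), S.Nonempty → ∃ v ∈ S, setDist G y S = G.dist y v := by
    intro y S hS
    obtain ⟨v, hv, hd⟩ := Nat.sInf_mem (hS.image (G.dist y))
    exact ⟨v, hv, hd.symm⟩
  set n := p.length with hn
  -- Q is nonempty
  have hQne : Q.Nonempty := by
    by_contra hne
    rw [Set.not_nonempty_iff_eq_empty] at hne
    rw [setDist, hne, Set.image_empty, Nat.sInf_empty] at huQ
    omega
  -- positions
  obtain ⟨iu, hiu_eq, hiu_le⟩ := Walk.mem_support_iff_exists_getVert.mp hu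
  obtain ⟨iw, hiw_eq, hiw_le⟩ := Walk.mem_support_iff_exists_getVert.mp hw
  have hds : ∀ j, j ≤ n → G.dist s (p.getVert j) = j := by
    intro j hj
    have := dist_getVert hconn p hp (Nat.zero_le j) hj
    rwa [p.getVert_zero, Nat.sub_zero] at this
  -- a ≤ n
  have han : a ≤ n := by
    obtain ⟨q0, hq0⟩ := hQne
    rw [hQ] at hq0
    obtain ⟨hq0s, hq0a, hq0b⟩ := hq0
    obtain ⟨iq, hiq_eq, hiq_le⟩ := Walk.mem_support_iff_exists_getVert.mp hq0s
    have := hds iq hiq_le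
    rw [hiq_eq] at this
    omega
  -- setDist s Q = a
  have hfaQ : p.getVert a ∈ Q := by
    rw [hQ]
    refine ⟨Walk.mem_support_iff_exists_getVert.mpr ⟨a, rfl, han⟩, ?_, ?_⟩ <;>
      rw [hds a han] <;> omega
  have hsQa : setDist G s Q = a := by
    have h1 : setDist G s Q ≤ a := by
      have := hsetle s Q _ hfaQ
      rwa [hds a han] at this
    have h2 : a ≤ setDist G s Q := by
      obtain ⟨v, hv, hveq⟩ := hsetmem s Q hQne
      rw [hQ] at hv
      obtain ⟨hv1, hv2, hv3⟩ := hv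
      omega
    omega
  rw [hsQa] at huQ hQw
  have hiua : iu < a := by rw [← hiu_eq, hds iu hiu_le] at huQ; exact huQ
  have hbiw : b < iw := by
    rw [← hiw_eq, hds iw hiw_le] at hQw
    rw [hQ] at hwnQ
    by_contra hle
    push_neg at hle
    exact hwnQ ⟨hw, by rw [← hiw_eq, hds iw hiw_le]; omega, by rw [← hiw_eq, hds iw hiw_le]; omega⟩
  -- D k = distance from x to k-th vertex
  set D : ℕ → ℕ := fun k => G.dist x (p.getVert k) with hD
  have hQlow : ∀ k, a ≤ k → k ≤ b → setDist G x Q ≤ D k := by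
    intro k hk1 hk2
    refine hsetle x Q _ ?_
    rw [hQ]
    exact ⟨Walk.mem_support_iff_exists_getVert.mpr ⟨k, rfl, by omega⟩,
      by rw [hds k (by omega)]; omega, by rw [hds k (by omega)]; omega⟩
  -- left and right minima
  set δL := sInf (D '' Set.Icc iu (a-1)) with hδL
  set δR := sInf (D '' Set.Icc (b+1) iw) with hδR
  have hδLu : δL ≤ D iu := Nat.sInf_le ⟨iu, ⟨le_rfl, by omega⟩, rfl⟩
  have hδRw : δR ≤ D iw := Nat.sInf_le ⟨iw, ⟨by omega, le_rfl⟩, rfl⟩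
  obtain ⟨kL, hkLmem, hkLeq⟩ := Nat.sInf_mem (⟨D iu, iu, ⟨le_rfl, by omega⟩, rfl⟩ :
    (D '' Set.Icc iu (a-1)).Nonempty)
  obtain ⟨kR, hkRmem, hkReq⟩ := Nat.sInf_mem (⟨D iw, iw, ⟨by omega, le_rfl⟩, rfl⟩ :
    (D '' Set.Icc (b+1) iw).Nonempty)
  set δ := max δL δR with hδ
  have hDiu : D iu = G.dist x u := by rw [hD]; simp [hiu_eq]
  have hDiw : D iw = G.dist x w := by rw [hD]; simp [hiw_eq]
  have hδQ : δ < setDist G x Q := by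
    rw [hδ]
    have h1 : δL < setDist G x Q := by omega
    have h2 : δR < setDist G x Q := by omega
    omega
  -- extreme positions with small distance to x
  have hFLne : ((Finset.Icc iu (a-1)).filter fun k => D k ≤ δ).Nonempty := by
    refine ⟨kL, Finset.mem_filter.mpr ⟨Finset.mem_Icc.mpr ⟨hkLmem.1, hkLmem.2⟩, ?_⟩⟩
    rw [hkLeq]; omega
  have hFRne : ((Finset.Icc (b+1) iw).filter fun k => D k ≤ δ).Nonempty := by
    refine ⟨kR, Finset.mem_filter.mpr ⟨Finset.mem_Icc.mpr ⟨hkRmem.1, hkRmem.2⟩, ?_⟩⟩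
    rw [hkReq]; omega
  obtain ⟨i1, hi1l, hi1r, hi1d, hi1max⟩ :
      ∃ i1, iu ≤ i1 ∧ i1 ≤ a - 1 ∧ D i1 ≤ δ ∧ ∀ k, iu ≤ k → k ≤ a - 1 → D k ≤ δ → k ≤ i1 := by
    refine ⟨((Finset.Icc iu (a-1)).filter fun k => D k ≤ δ).max' hFLne, ?_, ?_, ?_, ?_⟩
    · have := Finset.max'_mem _ hFLne
      rw [Finset.mem_filter, Finset.mem_Icc] at this
      exact this.1.1
    · have := Finset.max'_mem _ hFLne
      rw [Finset.mem_filter, Finset.mem_Icc] at this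
      exact this.1.2
    · have := Finset.max'_mem _ hFLne
      rw [Finset.mem_filter] at this
      exact this.2
    · intro k h1 h2 h3
      have hmem : k ∈ (Finset.Icc iu (a-1)).filter (fun k => D k ≤ δ) := by
        rw [Finset.mem_filter, Finset.mem_Icc]
        exact ⟨⟨h1, h2⟩, h3⟩
      exact Finset.le_max' _ k hmem
  obtain ⟨j1, hj1l, hj1r, hj1d, hj1min⟩ :
      ∃ j1, b + 1 ≤ j1 ∧ j1 ≤ iw ∧ D j1 ≤ δ ∧ ∀ k, b + 1 ≤ k → k ≤ iw → D k ≤ δ → j1 ≤ k := by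
    refine ⟨((Finset.Icc (b+1) iw).filter fun k => D k ≤ δ).min' hFRne, ?_, ?_, ?_, ?_⟩
    · have := Finset.min'_mem _ hFRne
      rw [Finset.mem_filter, Finset.mem_Icc] at this
      exact this.1.1
    · have := Finset.min'_mem _ hFRne
      rw [Finset.mem_filter, Finset.mem_Icc] at this
      exact this.1.2
    · have := Finset.min'_mem _ hFRne
      rw [Finset.mem_filter] at this
      exact this.2
    · intro k h1 h2 h3
      have hmem : k ∈ (Finset.Icc (b+1) iw).filter (fun k => D k ≤ δ) := by
        rw [Finset.mem_filter, Finset.mem_Icc]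
        exact ⟨⟨h1, h2⟩, h3⟩
      exact Finset.min'_le _ k hmem
  have hbn : b < n := by omega
  -- D i1 = δ via successor
  have hadji : G.Adj (p.getVert i1) (p.getVert (i1+1)) := p.adj_getVert_succ (by omega)
  have hDi1 : D i1 = δ := by
    have hsucc : δ < D (i1 + 1) := by
      rcases lt_or_ge (i1+1) a with hlt | hge
      · by_contra hcontra
        push_neg at hcontra
        have := hi1max (i1+1) (by omega) (by omega) hcontra
        omega
      · have hia : i1 + 1 = a := by omega
        have := hQlow (i1+1) (by omega) (by omega)
        omega
    have htri : D (i1+1) ≤ D i1 + 1 := by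
      have h1 : G.dist (p.getVert i1) (p.getVert (i1+1)) = 1 := dist_eq_one_iff_adj.mpr hadji
      have h2 := hconn.dist_triangle (u := x) (v := p.getVert i1) (w := p.getVert (i1+1))
      have e1 : G.dist x (p.getVert i1) = D i1 := rfl
      have e2 : G.dist x (p.getVert (i1+1)) = D (i1+1) := rfl
      omega
    omega
  -- D j1 = δ via predecessor
  have hDj1 : D j1 = δ := by
    have hpred : δ < D (j1 - 1) := by
      rcases lt_or_ge b (j1 - 1) with hlt | hge
      · by_contra hcontra
        push_neg at hcontra
        have := hj1min (j1-1) (by omega) (by omega) hcontra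
        omega
      · have hjb : j1 - 1 = b := by omega
        have := hQlow (j1-1) (by omega) (by omega)
        omega
    have hadjj : G.Adj (p.getVert (j1-1)) (p.getVert ((j1-1)+1)) := p.adj_getVert_succ (by omega)
    have htri : D (j1 - 1) ≤ D j1 + 1 := by
      have hj11 : (j1 - 1) + 1 = j1 := by omega
      have h1 : G.dist (p.getVert (j1-1)) (p.getVert ((j1-1)+1)) = 1 := dist_eq_one_iff_adj.mpr hadjj
      rw [hj11] at h1
      have h1' : G.dist (p.getVert j1) (p.getVert (j1-1)) = 1 := by
        rw [dist_comm]; exact h1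
      have h2 := hconn.dist_triangle (u := x) (v := p.getVert j1) (w := p.getVert (j1-1))
      have e1 : G.dist x (p.getVert j1) = D j1 := rfl
      have e2 : G.dist x (p.getVert (j1-1)) = D (j1-1) := rfl
      omega
    omega
  have hij : i1 < j1 := by omega
  have hj1n : j1 ≤ n := by omega
  -- minimality over the band
  have hminS : ∀ k, i1 ≤ k → k ≤ j1 → δ ≤ D k := by
    intro k h1 h2
    by_contra hcontra
    push_neg at hcontra
    rcases lt_or_ge k a with hka | hka
    · have hki : k ≤ i1 := hi1max k (by omega) (by omega) (by omega)
      have hk : k = i1 := by omega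
      rw [hk] at hcontra
      omega
    · rcases le_or_gt k b with hkb | hkb
      · have := hQlow k hka hkb
        omega
      · have hkj : j1 ≤ k := hj1min k (by omega) (by omega) (by omega)
        have hk : k = j1 := by omega
        rw [hk] at hcontra
        omega
  have hmid : ∀ k, i1 < k → k < j1 → δ < D k := by
    intro k h1 h2
    by_contra hcontra
    push_neg at hcontra
    rcases lt_or_ge k a with hka | hka
    · have := hi1max k (by omega) (by omega) (by omega)
      omega
    · rcases le_or_gt k b with hkb | hkb
      · have := hQlow k hka hkb
        omega
      · have := hj1min k (by omega) (by omega) (by omega)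
        omega
  -- the subpath from position i1 to position j1
  set q : G.Walk (p.getVert i1) (p.getVert j1) :=
    (seg p (j1 - i1) i1 (by omega)).copy rfl (congrArg p.getVert (by omega)) with hq
  have hqlen : q.length = j1 - i1 := by rw [hq, Walk.length_copy, seg_length]
  have hqdist : G.dist (p.getVert i1) (p.getVert j1) = j1 - i1 :=
    dist_getVert hconn p hp (le_of_lt hij) hj1n
  have hqsp : IsShortestPath G q :=
    ⟨q.isPath_of_length_eq_dist (by rw [hqlen, hqdist]), by rw [hqlen, hqdist]⟩
  set S : Set V := {v | v ∈ q.support} with hS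
  have hSmem : ∀ v, v ∈ S ↔ ∃ m, i1 ≤ m ∧ m ≤ j1 ∧ p.getVert m = v := by
    intro v
    constructor
    · intro hv
      obtain ⟨m', hm'eq, hm'le⟩ := Walk.mem_support_iff_exists_getVert.mp hv
      rw [hq, Walk.getVert_copy, seg_getVert] at hm'eq
      exact ⟨i1 + min m' (j1 - i1), by omega, by omega, hm'eq⟩
    · rintro ⟨m, hm1, hm2, rfl⟩
      refine Walk.mem_support_iff_exists_getVert.mpr ⟨m - i1, ?_, by omega⟩
      rw [hq, Walk.getVert_copy, seg_getVert]
      congr 1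
      omega
  have hSdist : setDist G x S = δ := by
    have h1 : setDist G x S ≤ δ := by
      have hmem : p.getVert i1 ∈ S := (hSmem _).mpr ⟨i1, le_rfl, le_of_lt hij, rfl⟩
      have := hsetle x S _ hmem
      have e1 : G.dist x (p.getVert i1) = D i1 := rfl
      omega
    have h2 : δ ≤ setDist G x S := by
      obtain ⟨v, hv, hveq⟩ := hsetmem x S ⟨p.getVert i1, (hSmem _).mpr ⟨i1, le_rfl, le_of_lt hij, rfl⟩⟩
      obtain ⟨m, hm1, hm2, rfl⟩ := (hSmem v).mp hv
      have := hminS m hm1 hm2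
      have e1 : G.dist x (p.getVert m) = D m := rfl
      omega
    omega
  have hproji : p.getVert i1 ∈ proj G x S :=
    ⟨(hSmem _).mpr ⟨i1, le_rfl, le_of_lt hij, rfl⟩, by rw [hSdist]; exact hDi1⟩
  have hprojj : p.getVert j1 ∈ proj G x S :=
    ⟨(hSmem _).mpr ⟨j1, le_of_lt hij, le_rfl, rfl⟩, by rw [hSdist]; exact hDj1⟩
  have hself : G.dist (p.getVert i1) (p.getVert i1) = 0 := SimpleGraph.dist_self
  obtain ⟨z, hzproj, hz1, hz2⟩ :=
    hγ (p.getVert i1) (p.getVert j1) q hqsp x (p.getVert i1) (p.getVert j1) hproji hprojj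
      (by rw [hself, hqdist]; omega)
      (by rw [hqdist]; omega)
  obtain ⟨m, hm1, hm2, rfl⟩ := (hSmem z).mp hzproj.1
  have hdzm : G.dist (p.getVert i1) (p.getVert m) = m - i1 :=
    dist_getVert hconn p hp hm1 (by omega)
  rw [hself] at hz1
  rw [hdzm] at hz1 hz2
  rw [hqdist] at hz2
  have hmval : D m = δ := by
    have h := hzproj.2
    have e1 : G.dist x (p.getVert m) = D m := rfl
    rw [e1] at h
    rw [← hSdist]
    exact h
  have := hmid m (by omega) (by omega)
  omega
end

section
/- In any graph G with projection gap γ and fixed vertex s, for every subpath Q_j of length γ of a shortest path starting in s, and every vertex x, either d(x, Q_j) = d(x, I(s,Q_j)) or d(x, Q_j) = d(x, R_s(Q_j)). -/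
open SimpleGraph

variable {V : Type*}

/-- `R_s(Q)`: vertices `w` such that some shortest path from `s` to `w` contains all of `Q`,
together with `Q` itself. -/
def Rset (G : SimpleGraph V) (s : V) (Q : Set V) : Set V :=
  {w | Q ⊆ interval G s w} ∪ Q

/-! If `x` were strictly closer to both `I(s, v_j)` and `R_s(Q_j)` than to `Q_j`, put
`M = d(x, Q_j) - 1` and walk from `v_j` along a geodesic towards a nearest `y ∈ I(s, v_j)`, and
from the far end of `Q_j` along a geodesic towards a nearest `w ∈ R_s(Q_j)`, stopping at the
first vertices `c`, `c'` within distance `M` of `x`. The walk `c → v_j → Q_j → c'` is a shortest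
path, since `c` lies between `s` and `v_j` and `c'` lies beyond `Q_j` as seen from `s`. The
projection of `x` onto it is exactly `{c, c'}`, and `d(c, c') ≥ γ + 2` contradicts the
projection gap. -/

section SetDist

variable {G : SimpleGraph V} {x u : V} {S A : Set V}

lemma setDist_le_dist (hu : u ∈ S) : setDist G x S ≤ G.dist x u :=
  Nat.sInf_le ⟨u, hu, rfl⟩

lemma exists_dist_eq_setDist (hS : S.Nonempty) : ∃ u ∈ S, G.dist x u = setDist G x S :=
  Nat.sInf_mem (hS.image _)

lemma setDist_eq_dist_of_forall_le (hu : u ∈ S) (h : ∀ v ∈ S, G.dist x u ≤ G.dist x v) :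
    setDist G x S = G.dist x u :=
  (setDist_le_dist hu).antisymm <| le_csInf ⟨_, u, hu, rfl⟩ <| by
    rintro _ ⟨v, hv, rfl⟩
    exact h v hv

lemma exists_dist_lt_setDist_of_setDist_union_ne (hS : S.Nonempty)
    (h : setDist G x S ≠ setDist G x (A ∪ S)) : ∃ y ∈ A, G.dist x y < setDist G x S := by
  obtain ⟨y, hy, hxy⟩ := exists_dist_eq_setDist (G := G) (x := x) (S := A ∪ S)
    (hS.mono Set.subset_union_right)
  obtain ⟨u, hu, hxu⟩ := exists_dist_eq_setDist (G := G) (x := x) hS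
  have hlt : G.dist x y < setDist G x S := by
    have := setDist_le_dist (G := G) (x := x) (show u ∈ A ∪ S from Or.inr hu)
    omega
  refine ⟨y, hy.resolve_right fun hyS => ?_, hlt⟩
  have := setDist_le_dist (G := G) (x := x) hyS
  omega

end SetDist

namespace SimpleGraph.Walk

variable {G : SimpleGraph V} {u v : V}

lemma dist_getVert_of_length_eq_dist_s10 (p : G.Walk u v) (hp : p.length = G.dist u v) {i : ℕ}
    (hi : i ≤ p.length) : G.dist u (p.getVert i) = i := by
  have := length_eq_dist_of_subwalk hp (p.isSubwalk_take i)
  rw [take_length] at this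
  omega

lemma exists_getVert_eq_of_mem_support_take_drop (p : G.Walk u v) {n m : ℕ} {z : V}
    (hz : z ∈ ((p.drop n).take m).support) : ∃ i, n ≤ i ∧ i ≤ n + m ∧ p.getVert i = z := by
  obtain ⟨k, rfl, -⟩ := mem_support_iff_exists_getVert.mp hz
  exact ⟨n + min m k, by omega, by omega, by rw [take_getVert, drop_getVert]⟩

/-- Distances to `x` change by at most one along an edge, so the first vertex of the walk within
distance `M` of `x` is at distance exactly `M`. -/
lemma exists_append_first_dist_le (W : G.Walk u v) {x : V} {M : ℕ} (hu : M < G.dist x u)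
    (hv : G.dist x v ≤ M) :
    ∃ (c : V) (W₁ : G.Walk u c) (W₂ : G.Walk c v), W₁.length + W₂.length = W.length ∧
      G.dist x c = M ∧ ∀ z ∈ W₁.support, z ≠ c → M < G.dist x z := by
  induction W with
  | nil => omega
  | @cons u u' v h q ih =>
    by_cases hu' : G.dist x u' ≤ M
    · refine ⟨u', cons h nil, q, by simp [add_comm], ?_, ?_⟩
      · rcases h.diff_dist_adj (u := x) with h' | h' | h' <;> omega
      · intro z hz hzu'
        simp only [support_cons, support_nil, List.mem_cons, List.not_mem_nil, or_false] at hz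
        rcases hz with rfl | rfl
        · exact hu
        · exact absurd rfl hzu'
    · obtain ⟨c, W₁, W₂, hlen, hc, hW₁⟩ := ih (by omega) hv
      refine ⟨c, cons h W₁, W₂, by simp [← hlen]; omega, hc, ?_⟩
      intro z hz hzc
      rw [support_cons, List.mem_cons] at hz
      rcases hz with rfl | hz
      · exact hu
      · exact hW₁ z hz hzc

end SimpleGraph.Walk

namespace ProjGapLE

variable {G : SimpleGraph V} {γ : ℕ}

lemma exists_mem_support_ne_ne_dist_le (hγ : ProjGapLE G γ) {a b : V} (P : G.Walk a b)
    (hP : P.length = G.dist a b) (hab : γ + 1 < G.dist a b) {x : V}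
    (hx : G.dist x a = G.dist x b) :
    ∃ z ∈ P.support, z ≠ a ∧ z ≠ b ∧ G.dist x z ≤ G.dist x a := by
  by_contra! h
  have hproj : setDist G x {v | v ∈ P.support} = G.dist x a := by
    refine setDist_eq_dist_of_forall_le P.start_mem_support fun z hz => ?_
    by_cases hza : z = a
    · rw [hza]
    by_cases hzb : z = b
    · rw [hzb, hx]
    exact (h z hz hza hzb).le
  obtain ⟨z, ⟨hz, hxz⟩, haz, hzb⟩ :=
    hγ a b P ⟨P.isPath_of_length_eq_dist hP, hP⟩ x a b
      ⟨P.start_mem_support, hproj.symm⟩ ⟨P.end_mem_support, by rw [hproj, hx]⟩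
      (by rw [dist_self]; omega) hab
  have hza : z ≠ a := by rintro rfl; simp at haz
  have hzb : z ≠ b := by rintro rfl; omega
  have := h z hz hza hzb
  omega

lemma exists_mem_support_dist_le (hγ : ProjGapLE G γ) (hconn : G.Connected) {s a b x y w : V}
    {M : ℕ} (S : G.Walk a b) (hS : γ ≤ S.length) (hab : G.dist s a + S.length ≤ G.dist s b)
    (hy : y ∈ interval G s a) (hw : b ∈ interval G s w) (hxy : G.dist x y ≤ M)
    (hxw : G.dist x w ≤ M) : ∃ z ∈ S.support, G.dist x z ≤ M := by
  by_contra! hSM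
  obtain ⟨Wy, hWy⟩ := hconn.exists_walk_length_eq_dist a y
  obtain ⟨c, L, L', hL, hxc, hLM⟩ :=
    Wy.exists_append_first_dist_le (hSM a S.start_mem_support) hxy
  obtain ⟨Ww, hWw⟩ := hconn.exists_walk_length_eq_dist b w
  obtain ⟨c', R, R', hR, hxc', hRM⟩ :=
    Ww.exists_append_first_dist_le (hSM b S.end_mem_support) hxw
  have hsc : G.dist s c + L.length ≤ G.dist s a := by
    have := hconn.dist_triangle (u := s) (v := y) (w := c)
    have := dist_le L'
    rw [dist_comm (v := y)] at hWy
    rw [dist_comm (u := c)] at this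
    simp only [interval, Set.mem_ofPred_eq] at hy
    omega
  have hsc' : G.dist s b + R.length ≤ G.dist s c' := by
    have := hconn.dist_triangle (u := s) (v := c') (w := w)
    have := dist_le R'
    simp only [interval, Set.mem_ofPred_eq] at hw
    omega
  have hL0 : L.length ≠ 0 := fun h0 => by
    have := hSM a S.start_mem_support
    rw [L.eq_of_length_eq_zero h0] at this
    omega
  have hR0 : R.length ≠ 0 := fun h0 => by
    have := hSM b S.end_mem_support
    rw [R.eq_of_length_eq_zero h0] at this
    omega
  let T := L.reverse.append (S.append R)
  have hTlen : T.length = L.length + S.length + R.length := by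
    simp only [T, Walk.length_append, Walk.length_reverse]
    omega
  have hT : T.length = G.dist c c' := by
    have := hconn.dist_triangle (u := s) (v := c) (w := c')
    exact le_antisymm (by omega) (dist_le T)
  obtain ⟨z, hz, hzc, hzc', hxz⟩ :=
    hγ.exists_mem_support_ne_ne_dist_le T hT (by omega) (hxc.trans hxc'.symm)
  simp only [T, Walk.mem_support_append_iff, Walk.support_reverse, List.mem_reverse] at hz
  rcases hz with hz | hz | hz
  · exact (hLM z hz hzc).not_ge (hxz.trans hxc.le)
  · exact (hSM z hz).not_ge (hxz.trans hxc.le)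
  · exact (hRM z hz hzc').not_ge (hxz.trans hxc.le)

end ProjGapLE

theorem stmt_10_general {V : Type*} (G : SimpleGraph V) (hconn : G.Connected)
    (γ : ℕ) (hγ : ProjGapLE G γ) (s t : V) (p : G.Walk s t) (hp : IsShortestPath G p)
    (j : ℕ) (hjγ : j + γ ≤ p.length) (Qj : Set V)
    (hQj : Qj = {v | v ∈ p.support ∧ j ≤ G.dist s v ∧ G.dist s v ≤ j + γ})
    (vj : V) (hvj : vj ∈ Qj) (hvjd : G.dist s vj = j) :
    ∀ x : V, setDist G x Qj = setDist G x (interval G s vj ∪ Qj) ∨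
      setDist G x Qj = setDist G x (Rset G s Qj) := by
  intro x
  by_contra! h
  have hdist {i : ℕ} (hi : i ≤ p.length) : G.dist s (p.getVert i) = i :=
    p.dist_getVert_of_length_eq_dist_s10 hp.2 hi
  have hvjp : p.getVert j = vj := by
    obtain ⟨i, rfl, hi⟩ := Walk.mem_support_iff_exists_getVert.mp (hQj ▸ hvj).1
    rw [← hvjd, hdist hi]
  let S := (p.drop j).take γ
  have hSQ : ∀ z ∈ S.support, z ∈ Qj := fun z hz => by
    obtain ⟨i, hji, hij, rfl⟩ := p.exists_getVert_eq_of_mem_support_take_drop hz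
    have hi := hdist (hij.trans hjγ)
    rw [hQj]
    exact ⟨p.getVert_mem_support i, by omega, by omega⟩
  have hSlen : S.length = γ := by
    simp only [S, Walk.take_length, Walk.drop_length]
    omega
  have hSend : G.dist s ((p.drop j).getVert γ) = j + γ := by
    rw [Walk.drop_getVert, hdist hjγ]
  obtain ⟨y, hyI, hxy⟩ := exists_dist_lt_setDist_of_setDist_union_ne ⟨vj, hvj⟩ h.1
  obtain ⟨w, hwR, hxw⟩ := exists_dist_lt_setDist_of_setDist_union_ne ⟨vj, hvj⟩ h.2
  obtain ⟨z, hzS, hxz⟩ := hγ.exists_mem_support_dist_le hconn S hSlen.ge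
    (by rw [hdist (by omega), hSlen, hSend]) (hvjp ▸ hyI) (hwR (hSQ _ S.end_mem_support))
    (x := x) (M := setDist G x Qj - 1) (by omega) (by omega)
  have := setDist_le_dist (G := G) (x := x) (hSQ z hzS)
  omega

theorem stmt_10 {V : Type*} [Fintype V] (G : SimpleGraph V) (hconn : G.Connected)
    (γ : ℕ) (hγ : ProjGapLE G γ) (s t : V) (p : G.Walk s t) (hp : IsShortestPath G p)
    (j : ℕ) (hjγ : j + γ ≤ p.length) (Qj : Set V)
    (hQj : Qj = {v | v ∈ p.support ∧ j ≤ G.dist s v ∧ G.dist s v ≤ j + γ})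
    (vj : V) (hvj : vj ∈ Qj) (hvjd : G.dist s vj = j) :
    ∀ x : V, setDist G x Qj = setDist G x (interval G s vj ∪ Qj) ∨
      setDist G x Qj = setDist G x (Rset G s Qj) :=
  stmt_10_general G hconn γ hγ s t p hp j hjγ Qj hQj vj hvj hvjd
end

section
/- If G is a chordal graph, then the projection gap of G is 0; equivalently, for every shortest path P and every vertex x, any two vertices u, w in the projection Pr(x,P) at positions i and k on P with k > i+1 imply the existence of a vertex of Pr(x,P) strictly between them. -/
open SimpleGraph

variable {V : Type*}

/-- A graph is chordal if every cycle with at least four edges has a chord: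
an edge of `G` between two vertices of the cycle that is not an edge of the cycle. -/
def IsChordal (G : SimpleGraph V) : Prop :=
  ∀ (v : V) (c : G.Walk v v), c.IsCycle → 4 ≤ c.length →
    ∃ a b : V, a ∈ c.support ∧ b ∈ c.support ∧ G.Adj a b ∧ s(a, b) ∉ c.edges


/-! The part of `P` between two projections of `x` is a geodesic `g 0, …, g m` whose ends are at
distance `D = d(x, P)` from `x` and whose interior is no closer. In a chordal graph, if the
interior is strictly farther then `m ≤ 1`. Otherwise take geodesics `r`, `r'` from `x` to `g 0`,
`g m` and, among the pairs `r a`, `r' b` at distance at most one, a pair `r α`, `r' β` with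
`a + b` maximal; it is an edge, and `r' β, …, r' D = g m, …, g 0 = r D, …, r α` is a cycle of
length at least four with no two non-consecutive vertices at distance at most one: inside each
of the three geodesic pieces by geodesicity, between `r`, `r'` and the interior of `g` because of
the distances from `x`, and between `r` and `r'` by maximality of `α + β`. This contradicts
chordality. -/

lemma setDist_le_dist_s12 {G : SimpleGraph V} {x v : V} {S : Set V} (hv : v ∈ S) :
    setDist G x S ≤ G.dist x v :=
  Nat.sInf_le ⟨v, hv, rfl⟩

lemma exists_max_add {P : ℕ → ℕ → Prop} (D : ℕ) (h : P 0 0) :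
    ∃ α ≤ D, ∃ β ≤ D, P α β ∧ ∀ a ≤ D, ∀ b ≤ D, P a b → a + b ≤ α + β := by
  classical
  obtain ⟨⟨α, β⟩, hmem, hmax⟩ :=
    ((Finset.range (D + 1) ×ˢ Finset.range (D + 1)).filter fun c => P c.1 c.2).exists_max_image
      (fun c => c.1 + c.2) ⟨(0, 0), by simp [h]⟩
  simp only [Finset.mem_filter, Finset.mem_product, Finset.mem_range] at hmem
  refine ⟨α, by omega, β, by omega, hmem.2, fun a ha b hb hab => hmax (a, b) ?_⟩
  simp only [Finset.mem_filter, Finset.mem_product, Finset.mem_range]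
  exact ⟨⟨by omega, by omega⟩, hab⟩

namespace SimpleGraph

variable {G : SimpleGraph V}

def IsGeodesicSeq (G : SimpleGraph V) (f : ℕ → V) (n : ℕ) : Prop :=
  ∀ i j, i ≤ j → j ≤ n → G.dist (f i) (f j) = j - i

namespace IsGeodesicSeq

variable {f : ℕ → V} {n : ℕ}

lemma dist_first (hf : G.IsGeodesicSeq f n) {i : ℕ} (hi : i ≤ n) : G.dist (f 0) (f i) = i :=
  hf 0 i (Nat.zero_le i) hi

lemma dist_of_ge (hf : G.IsGeodesicSeq f n) {i j : ℕ} (hji : j ≤ i) (hi : i ≤ n) :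
    G.dist (f i) (f j) = i - j := by
  rw [SimpleGraph.dist_comm, hf j i hji hi]

lemma shift (hf : G.IsGeodesicSeq f n) {k m : ℕ} (hkm : k + m ≤ n) :
    G.IsGeodesicSeq (fun j => f (k + j)) m := fun i j hij hj => by
  rw [hf (k + i) (k + j) (by omega) (by omega)]
  omega

end IsGeodesicSeq

lemma Walk.isGeodesicSeq_getVert {a b : V} (p : G.Walk a b) (hp : p.length = G.dist a b) :
    G.IsGeodesicSeq p.getVert p.length := by
  intro i j hij hj
  have hdrop := length_eq_dist_of_subwalk hp (p.isSubwalk_drop i)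
  have htake := length_eq_dist_of_subwalk hdrop ((p.drop i).isSubwalk_take (j - i))
  rw [take_length, drop_length, drop_getVert, Nat.add_sub_cancel' hij] at htake
  omega

lemma Reachable.exists_isGeodesicSeq {x y : V} (h : G.Reachable x y) :
    ∃ f : ℕ → V, f 0 = x ∧ f (G.dist x y) = y ∧ G.IsGeodesicSeq f (G.dist x y) := by
  obtain ⟨p, hp⟩ := h.exists_walk_length_eq_dist
  exact ⟨p.getVert, p.getVert_zero, hp ▸ p.getVert_length, hp ▸ p.isGeodesicSeq_getVert hp⟩

lemma exists_walk_getVert_eq (f : ℕ → V) (n : ℕ) (hf : ∀ i < n, G.Adj (f i) (f (i + 1))) :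
    ∃ w : G.Walk (f 0) (f n), w.length = n ∧ ∀ i ≤ n, w.getVert i = f i := by
  induction n generalizing f with
  | zero =>
    refine ⟨.nil, rfl, fun i hi => ?_⟩
    rw [Nat.le_zero.mp hi]
    rfl
  | succ n ih =>
    obtain ⟨w, hlen, hget⟩ := ih (fun i => f (i + 1)) fun i hi => hf (i + 1) (by omega)
    refine ⟨.cons (hf 0 (by omega)) w, by simp [hlen], fun i hi => ?_⟩
    cases i with
    | zero => rfl
    | succ i => rw [Walk.getVert_cons_succ, hget i (by omega)]

lemma exists_isCycle_of_injOn {f : ℕ → V} {n : ℕ} (hn : 2 ≤ n)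
    (hf : ∀ i < n, G.Adj (f i) (f (i + 1))) (hclose : G.Adj (f n) (f 0))
    (hinj : ∀ i ≤ n, ∀ j ≤ n, f i = f j → i = j) :
    ∃ c : G.Walk (f n) (f n), c.IsCycle ∧ c.length = n + 1 ∧
      (∀ a ∈ c.support, ∃ i ≤ n, f i = a) ∧ (∀ i < n, s(f i, f (i + 1)) ∈ c.edges) ∧
      s(f n, f 0) ∈ c.edges := by
  obtain ⟨w, hlen, hget⟩ := exists_walk_getVert_eq f n hf
  have hpath : w.IsPath := (Walk.IsPath.getVert_injOn_iff w).mp fun i hi j hj he => by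
    simp only [Set.mem_ofPred_eq, hlen] at hi hj
    exact hinj i hi j hj (by rwa [hget i hi, hget j hj] at he)
  have hclose_notMem : s(f n, f 0) ∉ w.edges := by
    rw [w.mk_mem_edges_iff_exists]
    rintro ⟨i, hi, he⟩
    rw [hget i (by omega), hget (i + 1) (by omega), Sym2.eq_iff] at he
    rcases he with ⟨h1, h2⟩ | ⟨h1, h2⟩
    · have := hinj _ (by omega) 0 (Nat.zero_le n) h2
      omega
    · have := hinj _ (by omega) 0 (Nat.zero_le n) h1
      have := hinj _ (by omega) n le_rfl h2
      omega
  refine ⟨.cons hclose w, (Walk.cons_isCycle_iff w hclose).mpr ⟨hpath, hclose_notMem⟩,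
    by simp [hlen], fun a ha => ?_, fun i hi => ?_, by simp⟩
  · rcases List.mem_cons.mp (Walk.support_cons _ _ ▸ ha) with rfl | ha
    · exact ⟨n, le_rfl, rfl⟩
    · obtain ⟨i, rfl, hi⟩ := Walk.mem_support_iff_exists_getVert.mp ha
      exact ⟨i, hlen ▸ hi, (hget i (hlen ▸ hi)).symm⟩
  · rw [Walk.edges_cons]
    exact List.mem_cons_of_mem _ <| w.mk_mem_edges_iff_exists.mpr
      ⟨i, hlen.symm ▸ hi, by rw [hget i hi.le, hget (i + 1) hi]⟩

end SimpleGraph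

theorem IsChordal.exists_dist_le_one {G : SimpleGraph V} (hG : IsChordal G) {f : ℕ → V} {n : ℕ}
    (hn : 3 ≤ n) (hf : ∀ i < n, G.Adj (f i) (f (i + 1))) (hclose : G.Adj (f n) (f 0)) :
    ∃ i j, i + 2 ≤ j ∧ j ≤ n ∧ ¬(i = 0 ∧ j = n) ∧ G.dist (f i) (f j) ≤ 1 := by
  by_contra! hfar
  have hne : ∀ i j, i < j → j ≤ n → f i ≠ f j := by
    intro i j hij hj he
    by_cases hsucc : j = i + 1
    · exact (hf i (by omega)).ne (hsucc ▸ he)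
    by_cases hends : i = 0 ∧ j = n
    · obtain ⟨rfl, rfl⟩ := hends
      exact hclose.ne he.symm
    have := hfar i j (by omega) hj (fun hi hj' => hends ⟨hi, hj'⟩)
    rw [he, dist_self] at this
    omega
  obtain ⟨c, hc, hlen, hmem, hedge, hclose_mem⟩ :=
    exists_isCycle_of_injOn (by omega) hf hclose fun i hi j hj he => by
      rcases lt_trichotomy i j with h | h | h
      exacts [absurd he (hne i j h hj), h, absurd he.symm (hne j i h hi)]
  have hchord : ∀ i j, i < j → j ≤ n → G.Adj (f i) (f j) → s(f i, f j) ∈ c.edges := by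
    intro i j hij hj hadj
    by_cases hsucc : j = i + 1
    · exact hsucc ▸ hedge i (by omega)
    by_cases hends : i = 0 ∧ j = n
    · obtain ⟨rfl, rfl⟩ := hends
      exact Sym2.eq_swap ▸ hclose_mem
    have := hfar i j (by omega) hj (fun hi hj' => hends ⟨hi, hj'⟩)
    rw [dist_eq_one_iff_adj.mpr hadj] at this
    omega
  obtain ⟨a, b, ha, hb, hab, hnot⟩ := hG _ c hc (by omega)
  obtain ⟨i, hi, rfl⟩ := hmem a ha
  obtain ⟨j, hj, rfl⟩ := hmem b hb
  rcases lt_trichotomy i j with h | rfl | h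
  · exact hnot (hchord i j h hj hab)
  · exact hab.ne rfl
  · exact hnot (Sym2.eq_swap ▸ hchord j i h hi hab.symm)

/-- The closed sequence `s 0, …, s p = g m, …, g 0 = t q, …, t 0` of length `p + m + q`. -/
def triangleSeq (s g t : ℕ → V) (p m q : ℕ) : ℕ → V := fun i =>
  if i ≤ p then s i else if i ≤ p + m then g (p + m - i) else t (p + m + q - i)

section triangleSeq

variable {G : SimpleGraph V} {s g t : ℕ → V} {p m q : ℕ}

lemma triangleSeq_of_le {i : ℕ} (hi : i ≤ p) : triangleSeq s g t p m q i = s i :=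
  if_pos hi

lemma triangleSeq_of_mid (hsg : s p = g m) {i : ℕ} (hpi : p ≤ i) (hi : i ≤ p + m) :
    triangleSeq s g t p m q i = g (p + m - i) := by
  unfold triangleSeq
  split_ifs with h
  · obtain rfl : i = p := by omega
    rw [hsg, Nat.add_sub_cancel_left]
  · rfl

lemma triangleSeq_of_ge (htg : t q = g 0) (hm : 0 < m) {i : ℕ} (hi : p + m ≤ i) :
    triangleSeq s g t p m q i = t (p + m + q - i) := by
  unfold triangleSeq
  split_ifs with h h'
  · omega
  · obtain rfl : i = p + m := by omega
    rw [Nat.sub_self, Nat.add_sub_cancel_left, htg]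
  · rfl

lemma triangleSeq_adj (hs : G.IsGeodesicSeq s p) (hg : G.IsGeodesicSeq g m)
    (ht : G.IsGeodesicSeq t q) (hsg : s p = g m) (htg : t q = g 0) (hm : 0 < m) {i : ℕ}
    (hi : i < p + m + q) :
    G.Adj (triangleSeq s g t p m q i) (triangleSeq s g t p m q (i + 1)) := by
  rw [← dist_eq_one_iff_adj]
  by_cases h1 : i + 1 ≤ p
  · rw [triangleSeq_of_le (by omega), triangleSeq_of_le h1, hs i (i + 1) (by omega) h1]
    omega
  by_cases h2 : i + 1 ≤ p + m
  · rw [triangleSeq_of_mid hsg (by omega) (by omega), triangleSeq_of_mid hsg (by omega) h2,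
      hg.dist_of_ge (by omega) (by omega)]
    omega
  · rw [triangleSeq_of_ge htg hm (by omega), triangleSeq_of_ge htg hm (by omega),
      ht.dist_of_ge (by omega) (by omega)]
    omega

lemma two_le_dist_triangleSeq (hs : G.IsGeodesicSeq s p) (hg : G.IsGeodesicSeq g m)
    (ht : G.IsGeodesicSeq t q) (hsg : s p = g m) (htg : t q = g 0) (hm : 0 < m)
    (hs_far : ∀ b < p, ∀ k, 0 < k → k < m → 2 ≤ G.dist (s b) (g k))
    (ht_far : ∀ a < q, ∀ k, 0 < k → k < m → 2 ≤ G.dist (t a) (g k))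
    (hts_far : ∀ a ≤ q, ∀ b ≤ p, 0 < a + b → 2 ≤ G.dist (t a) (s b))
    {i j : ℕ} (hij : i + 2 ≤ j) (hj : j ≤ p + m + q) (hends : ¬(i = 0 ∧ j = p + m + q)) :
    2 ≤ G.dist (triangleSeq s g t p m q i) (triangleSeq s g t p m q j) := by
  by_cases hjp : j ≤ p
  · rw [triangleSeq_of_le (by omega), triangleSeq_of_le hjp, hs i j (by omega) hjp]
    omega
  by_cases hmi : p + m ≤ i
  · rw [triangleSeq_of_ge htg hm hmi, triangleSeq_of_ge htg hm (by omega),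
      ht.dist_of_ge (by omega) (by omega)]
    omega
  by_cases hg_mid : p ≤ i ∧ j ≤ p + m
  · rw [triangleSeq_of_mid hsg hg_mid.1 (by omega), triangleSeq_of_mid hsg (by omega) hg_mid.2,
      hg.dist_of_ge (by omega) (by omega)]
    omega
  by_cases hts : i ≤ p ∧ p + m ≤ j
  · rw [triangleSeq_of_le hts.1, triangleSeq_of_ge htg hm hts.2, SimpleGraph.dist_comm]
    exact hts_far _ (by omega) _ hts.1 (by omega)
  by_cases hip : i < p
  · rw [triangleSeq_of_le hip.le, triangleSeq_of_mid hsg (by omega) (by omega)]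
    exact hs_far i hip _ (by omega) (by omega)
  · rw [triangleSeq_of_mid hsg (by omega) (by omega), triangleSeq_of_ge htg hm (by omega),
      SimpleGraph.dist_comm]
    exact ht_far _ (by omega) _ (by omega) (by omega)

end triangleSeq

theorem IsChordal.not_adj_of_far_geodesics {G : SimpleGraph V} (hG : IsChordal G)
    {s g t : ℕ → V} {p m q : ℕ} (hs : G.IsGeodesicSeq s p) (hg : G.IsGeodesicSeq g m)
    (ht : G.IsGeodesicSeq t q) (hsg : s p = g m) (htg : t q = g 0) (hm : 2 ≤ m)
    (hs_far : ∀ b < p, ∀ k, 0 < k → k < m → 2 ≤ G.dist (s b) (g k))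
    (ht_far : ∀ a < q, ∀ k, 0 < k → k < m → 2 ≤ G.dist (t a) (g k))
    (hts_far : ∀ a ≤ q, ∀ b ≤ p, 0 < a + b → 2 ≤ G.dist (t a) (s b)) :
    ¬G.Adj (t 0) (s 0) := by
  intro hadj
  have hpq : 0 < p + q := by
    by_contra h
    obtain ⟨rfl, rfl⟩ : p = 0 ∧ q = 0 := by omega
    have := hg 0 m (Nat.zero_le m) le_rfl
    rw [← hsg, ← htg, dist_eq_one_iff_adj.mpr hadj] at this
    omega
  have hclose : G.Adj (triangleSeq s g t p m q (p + m + q)) (triangleSeq s g t p m q 0) := by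
    rwa [triangleSeq_of_ge htg (by omega) (by omega), triangleSeq_of_le (Nat.zero_le p),
      Nat.sub_self]
  obtain ⟨i, j, hij, hj, hends, hle⟩ :=
    hG.exists_dist_le_one (f := triangleSeq s g t p m q) (by omega)
    (fun i hi => triangleSeq_adj hs hg ht hsg htg (by omega) hi) hclose
  have := two_le_dist_triangleSeq hs hg ht hsg htg (by omega) hs_far ht_far hts_far hij hj hends
  omega

theorem IsChordal.geodesic_length_le_one {G : SimpleGraph V} (hG : IsChordal G)
    (hconn : G.Connected) {x : V} {g : ℕ → V} {m D : ℕ} (hg : G.IsGeodesicSeq g m)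
    (h0 : G.dist x (g 0) = D) (hm : G.dist x (g m) = D)
    (hint : ∀ k, 0 < k → k < m → D < G.dist x (g k)) : m ≤ 1 := by
  by_contra! hm2
  obtain ⟨r, hr0, hrD, hr⟩ := (hconn.preconnected x (g 0)).exists_isGeodesicSeq
  obtain ⟨r', hr'0, hr'D, hr'⟩ := (hconn.preconnected x (g m)).exists_isGeodesicSeq
  rw [h0] at hrD hr
  rw [hm] at hr'D hr'
  have hlev : ∀ a ≤ D, G.dist x (r a) = a := fun a ha => hr0 ▸ hr.dist_first ha
  have hlev' : ∀ b ≤ D, G.dist x (r' b) = b := fun b hb => hr'0 ▸ hr'.dist_first hb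
  obtain ⟨α, hα, β, hβ, hclose, hmax⟩ :=
    exists_max_add (P := fun a b => G.dist (r a) (r' b) ≤ 1) D (by simp [hr0, hr'0])
  have hne : r α ≠ r' β := by
    intro he
    have hαβ : α = β := by rw [← hlev α hα, he, hlev' β hβ]
    rcases hα.lt_or_eq with hαD | hαD
    · have := hmax (α + 1) hαD β hβ (by rw [← he, hr.dist_of_ge (by omega) hαD]; omega)
      omega
    · rw [hαD, show β = D by omega, hrD, hr'D] at he
      have := hg 0 m (Nat.zero_le m) le_rfl
      rw [he, SimpleGraph.dist_self] at this
      omega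
  have hadj : G.Adj (r α) (r' β) :=
    dist_eq_one_iff_adj.mp (le_antisymm hclose (hconn.pos_dist_of_ne hne))
  refine hG.not_adj_of_far_geodesics (s := fun b => r' (β + b)) (t := fun a => r (α + a))
    (hr'.shift (Nat.add_sub_cancel' hβ).le) hg (hr.shift (Nat.add_sub_cancel' hα).le)
    (by rw [Nat.add_sub_cancel' hβ, hr'D]) (by rw [Nat.add_sub_cancel' hα, hrD]) hm2
    ?_ ?_ ?_ (by simpa using hadj)
  · intro b hb k hk0 hkm
    have := hconn.dist_triangle (u := x) (v := r' (β + b)) (w := g k)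
    have := hint k hk0 hkm
    have := hlev' (β + b) (by omega)
    omega
  · intro a ha k hk0 hkm
    have := hconn.dist_triangle (u := x) (v := r (α + a)) (w := g k)
    have := hint k hk0 hkm
    have := hlev (α + a) (by omega)
    omega
  · intro a ha b hb hab
    by_contra! hlt
    have := hmax (α + a) (by omega) (β + b) (by omega) (by omega)
    omega

theorem stmt_12_general {V : Type*} (G : SimpleGraph V) (hconn : G.Connected)
    (hchordal : IsChordal G) :
    ProjGapLE G 0 := by
  intro s t p hp x u w hu hw hlt hgap
  have hgeo := p.isGeodesicSeq_getVert hp.2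
  have hpos : ∀ j ≤ p.length, G.dist s (p.getVert j) = j := fun j hj => by
    simpa using hgeo.dist_first hj
  obtain ⟨i, rfl, hi⟩ := Walk.mem_support_iff_exists_getVert.mp hu.1
  obtain ⟨k, rfl, hk⟩ := Walk.mem_support_iff_exists_getVert.mp hw.1
  rw [hpos i hi, hpos k hk] at hlt ⊢
  rw [hgeo i k hlt.le hk] at hgap
  by_contra! hno
  have hint : ∀ j, 0 < j → j < k - i →
      setDist G x {v | v ∈ p.support} < G.dist x (p.getVert (i + j)) := by
    intro j hj0 hjk
    have hmem : p.getVert (i + j) ∈ {v | v ∈ p.support} := p.getVert_mem_support _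
    refine (setDist_le_dist_s12 hmem).lt_of_ne fun h => ?_
    have := hno _ ⟨hmem, h.symm⟩ (by rw [hpos _ (by omega)]; omega)
    rw [hpos _ (by omega)] at this
    omega
  have := hchordal.geodesic_length_le_one hconn (hgeo.shift (m := k - i) (by omega))
    (by simpa using hu.2) (by simpa [Nat.add_sub_cancel' hlt.le] using hw.2) hint
  omega

theorem stmt_12 {V : Type*} [Fintype V] (G : SimpleGraph V) (hconn : G.Connected)
    (hchordal : IsChordal G) :
    ProjGapLE G 0 :=
  stmt_12_general G hconn hchordal
end

section
/- Let G be a chordal graph, x a vertex, r a nonnegative integer, and u, v two distinct vertices in the ball N^r[x]. If there is a path P connecting u and v with P ∩ N^r[x] = {u, v}, then u and v are adjacent. -/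
open SimpleGraph

variable {V : Type*}

/-!
Join `u` and `v` a second time through the inside of the ball: shortest paths from `u` and from
`v` to `x` meet, apart from their ends, only vertices at distance `< r` from `x`, while the
interior of `P` lies at distance `> r`. Since the distance to `x` changes by at most one along
an edge, no edge joins the two interiors. Among all pairs of such `u`–`v` paths take one of
minimal total length. If `u` and `v` were not adjacent, the two paths would form a cycle of
length at least four; a chord of it cannot join the two interiors, and a chord inside one of
the paths would shorten that path.
-/

namespace SimpleGraph

variable {G : SimpleGraph V}

namespace Walk

lemma exists_length_lt_of_adj_getVert {u v : V} (p : G.Walk u v) {i j : ℕ} (hij : i + 1 < j)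
    (hj : j ≤ p.length) (h : G.Adj (p.getVert i) (p.getVert j)) :
    ∃ q : G.Walk u v, q.support ⊆ p.support ∧ q.length < p.length := by
  refine ⟨(p.take i).append (cons h (p.drop j)), fun z hz => ?_, ?_⟩
  · rw [mem_support_append_iff, support_cons, List.mem_cons, support_take,
      drop_support_eq_support_drop_min] at hz
    rcases hz with hz | rfl | hz
    · exact List.mem_of_mem_take hz
    · exact p.getVert_mem_support i
    · exact List.mem_of_mem_drop hz
  · simp only [length_append, length_cons, take_length, drop_length]
    omega

lemma exists_isPath_length_lt_of_adj_of_notMem_edges [DecidableEq V] {u v c d : V}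
    (p : G.Walk u v) (hc : c ∈ p.support) (hd : d ∈ p.support) (hcd : G.Adj c d)
    (he : s(c, d) ∉ p.edges) :
    ∃ q : G.Walk u v, q.IsPath ∧ q.support ⊆ p.support ∧ q.length < p.length := by
  obtain ⟨i, rfl, hi⟩ := mem_support_iff_exists_getVert.mp hc
  obtain ⟨j, rfl, hj⟩ := mem_support_iff_exists_getVert.mp hd
  wlog hij : i ≤ j generalizing i j
  · exact this j hj hd i hi hc hcd.symm (Sym2.eq_swap ▸ he) (by omega)
  have hij : i + 1 < j := by
    by_contra!
    obtain rfl | rfl : j = i ∨ j = i + 1 := by omega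
    · exact hcd.ne rfl
    · exact he ((mk_mem_edges_iff_exists p).mpr ⟨i, by omega, rfl⟩)
  obtain ⟨q, hsub, hlt⟩ := p.exists_length_lt_of_adj_getVert hij hj hcd
  exact ⟨q.bypass, q.bypass_isPath, fun z hz => hsub (q.support_bypass_subset_support hz),
    q.length_bypass_le_length.trans_lt hlt⟩

lemma IsPath.isCycle_append_reverse {u v : V} {P Q : G.Walk u v} (hP : P.IsPath) (hQ : Q.IsPath)
    (hPQ : ∀ z ∈ P.support, z ∈ Q.support → z = u ∨ z = v) (hlen : 2 ≤ P.length) :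
    (P.append Q.reverse).IsCycle := by
  refine hP.isCycle_append hQ.reverse (fun z hzP hzQ => ?_) (Or.inl hlen)
  have hzu : z ≠ u := by
    rintro rfl
    exact (List.nodup_cons.mp (P.cons_tail_support ▸ hP.support_nodup)).1 hzP
  have hzv : z ≠ v := by
    rintro rfl
    exact (List.nodup_cons.mp (Q.reverse.cons_tail_support ▸ hQ.reverse.support_nodup)).1 hzQ
  have hzQ' : z ∈ Q.support := by simpa using List.mem_of_mem_tail hzQ
  grind [List.mem_of_mem_tail]

lemma two_le_length_of_not_adj {u v : V} (huv : u ≠ v) (hadj : ¬G.Adj u v) (p : G.Walk u v) :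
    2 ≤ p.length := by
  by_contra! h
  interval_cases hp : p.length
  · exact huv (eq_of_length_eq_zero hp)
  · exact hadj (adj_of_length_eq_one hp)

end Walk

lemma Connected.exists_walk_forall_dist_lt (hconn : G.Connected) (x y : V) :
    ∃ p : G.Walk y x, ∀ z ∈ p.support, z = y ∨ G.dist x z < G.dist x y := by
  classical
  obtain ⟨p, hp⟩ := hconn.exists_walk_length_eq_dist y x
  refine ⟨p, fun z hz => or_iff_not_imp_left.mpr fun hzy => ?_⟩
  calc G.dist x z = G.dist z x := dist_comm
    _ ≤ (p.dropUntil z hz).length := dist_le _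
    _ < p.length := Walk.length_dropUntil_lt_length hz hzy
    _ = G.dist x y := hp.trans dist_comm

end SimpleGraph

theorem IsChordal.adj_of_separated_paths {G : SimpleGraph V} (hG : IsChordal G) {S T : Set V}
    (hST : Disjoint S T) (hnadj : ∀ s ∈ S, ∀ t ∈ T, ¬G.Adj s t) {u v : V} (huv : u ≠ v)
    (P Q : G.Walk u v) (hP : P.IsPath) (hQ : Q.IsPath)
    (hPS : ∀ z ∈ P.support, z = u ∨ z = v ∨ z ∈ S)
    (hQT : ∀ z ∈ Q.support, z = u ∨ z = v ∨ z ∈ T) : G.Adj u v := by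
  classical
  by_contra hadj
  obtain ⟨n, hn⟩ : ∃ n, P.length + Q.length = n := ⟨_, rfl⟩
  induction n using Nat.strong_induction_on generalizing P Q with
  | _ n ih =>
  have hPQ (z : V) (hzP : z ∈ P.support) (hzQ : z ∈ Q.support) : z = u ∨ z = v := by
    have := Set.disjoint_left.mp hST
    grind
  have hP2 := Walk.two_le_length_of_not_adj huv hadj P
  have hQ2 := Walk.two_le_length_of_not_adj huv hadj Q
  have hC := hP.isCycle_append_reverse hQ hPQ hP2
  obtain ⟨c, d, hc, hd, hcd, he⟩ :=
    hG u _ hC (by simp only [Walk.length_append, Walk.length_reverse]; omega)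
  simp only [Walk.mem_support_append_iff, Walk.support_reverse, List.mem_reverse,
    Walk.edges_append, Walk.edges_reverse, List.mem_append, not_or] at hc hd he
  by_cases hPcd : c ∈ P.support ∧ d ∈ P.support
  · obtain ⟨P', hP', hsub, hlt⟩ :=
      P.exists_isPath_length_lt_of_adj_of_notMem_edges hPcd.1 hPcd.2 hcd he.1
    exact ih _ (by omega) P' Q hP' hQ (fun z hz => hPS z (hsub hz)) hQT rfl
  by_cases hQcd : c ∈ Q.support ∧ d ∈ Q.support
  · obtain ⟨Q', hQ', hsub, hlt⟩ := Q.exists_isPath_length_lt_of_adj_of_notMem_edges hQcd.1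
      hQcd.2 hcd he.2
    exact ih _ (by omega) P Q' hP hQ' hPS (fun z hz => hQT z (hsub hz)) rfl
  have mem_S (z : V) (hzP : z ∈ P.support) (hzQ : z ∉ Q.support) : z ∈ S := by
    grind [Walk.start_mem_support, Walk.end_mem_support]
  have mem_T (z : V) (hzQ : z ∈ Q.support) (hzP : z ∉ P.support) : z ∈ T := by
    grind [Walk.start_mem_support, Walk.end_mem_support]
  by_cases hcP : c ∈ P.support
  · have hdP : d ∉ P.support := fun h => hPcd ⟨hcP, h⟩
    have hdQ : d ∈ Q.support := hd.resolve_left hdP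
    exact hnadj c (mem_S c hcP fun h => hQcd ⟨h, hdQ⟩) d (mem_T d hdQ hdP) hcd
  · have hcQ : c ∈ Q.support := hc.resolve_left hcP
    have hdP : d ∈ P.support := hd.resolve_right fun h => hQcd ⟨hcQ, h⟩
    exact hnadj d (mem_S d hdP fun h => hQcd ⟨hcQ, h⟩) c (mem_T c hcQ hcP) hcd.symm

theorem stmt_13_general {V : Type*} (G : SimpleGraph V) (hconn : G.Connected)
    (hchordal : IsChordal G) (x : V) (r : ℕ) (u v : V) (huv : u ≠ v)
    (hu : G.dist x u ≤ r) (hv : G.dist x v ≤ r)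
    (P : G.Walk u v) (hP : P.IsPath)
    (hPball : ∀ z ∈ P.support, G.dist x z ≤ r → z = u ∨ z = v) :
    G.Adj u v := by
  classical
  obtain ⟨pu, hpu⟩ := hconn.exists_walk_forall_dist_lt x u
  obtain ⟨pv, hpv⟩ := hconn.exists_walk_forall_dist_lt x v
  let Q := (pu.append pv.reverse).bypass
  have hQ : ∀ z ∈ Q.support, z = u ∨ z = v ∨ z ∈ {z | G.dist x z < r} := by
    intro z hz
    have hz' := (pu.append pv.reverse).support_bypass_subset_support hz
    simp only [Walk.mem_support_append_iff, Walk.support_reverse, List.mem_reverse] at hz'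
    grind
  refine hchordal.adj_of_separated_paths (S := {z | r < G.dist x z}) ?_ ?_ huv P Q hP
    (Walk.bypass_isPath _) (fun z hz => ?_) hQ
  · exact Set.disjoint_left.mpr fun z (hz : r < _) (hz' : _ < r) => by omega
  · intro s (hs : r < _) t (ht : _ < r) hst
    have := hst.diff_dist_adj (u := x)
    omega
  · by_cases hzr : G.dist x z ≤ r
    · exact (hPball z hz hzr).imp_right Or.inl
    · exact Or.inr (Or.inr (not_le.mp hzr))

theorem stmt_13 {V : Type*} [Fintype V] (G : SimpleGraph V) (hconn : G.Connected)
    (hchordal : IsChordal G) (x : V) (r : ℕ) (u v : V) (huv : u ≠ v)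
    (hu : G.dist x u ≤ r) (hv : G.dist x v ≤ r)
    (P : G.Walk u v) (hP : P.IsPath)
    (hPball : ∀ z ∈ P.support, G.dist x z ≤ r → z = u ∨ z = v) :
    G.Adj u v :=
  stmt_13_general G hconn hchordal x r u v huv hu hv P hP hPball
end

section
/- If G is a δ-hyperbolic graph, then the projection gap of G is at most 4δ; in particular, for any vertex x and any shortest path P, the diameter of the projection Pr(x,P) is at most 4δ + 1. -/
open SimpleGraph

variable {V : Type*}

/-- `G` is `δ`-hyperbolic: for any four vertices, the two larger of the three pairwise
distance sums differ by at most `2δ`. -/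
def Hyperbolic (G : SimpleGraph V) (δ : ℕ) : Prop :=
  ∀ u v w x : V,
    G.dist u v + G.dist w x ≤ max (G.dist u w + G.dist v x) (G.dist u x + G.dist v w) + 2 * δ ∧
    G.dist u w + G.dist v x ≤ max (G.dist u v + G.dist w x) (G.dist u x + G.dist v w) + 2 * δ ∧
    G.dist u x + G.dist v w ≤ max (G.dist u v + G.dist w x) (G.dist u w + G.dist v x) + 2 * δ



private lemma dist_getVert_le' {V : Type*} {G : SimpleGraph V} (hconn : G.Connected)
    {u w : V} (q : G.Walk u w) (i : ℕ) :
    G.dist u (q.getVert i) ≤ i := by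
  induction q generalizing i with
  | nil => simp [Walk.getVert, SimpleGraph.dist_self]
  | @cons a b c h q ih =>
    rcases i with _ | i
    · simp [Walk.getVert]
    · rw [Walk.getVert_cons_succ]
      calc G.dist a (q.getVert i) ≤ G.dist a b + G.dist b (q.getVert i) := hconn.dist_triangle
        _ ≤ 1 + i := by
            have h1 : G.dist a b ≤ 1 := by
              simpa using SimpleGraph.dist_le (Walk.cons h Walk.nil)
            exact Nat.add_le_add h1 (ih i)
        _ = i + 1 := Nat.add_comm _ _

private lemma getVert_dist_le' {V : Type*} {G : SimpleGraph V} (hconn : G.Connected)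
    {u w : V} (q : G.Walk u w) (i : ℕ) :
    G.dist (q.getVert i) w ≤ q.length - i := by
  have := dist_getVert_le' hconn q.reverse (q.length - i)
  rw [Walk.getVert_reverse] at this
  rcases le_or_gt i q.length with hi | hi
  · have h2 : q.length - (q.length - i) = i := by omega
    rw [h2] at this
    simpa [G.dist_comm] using this.trans (by omega)
  · rw [q.getVert_of_length_le (le_of_lt hi)]
    simp [SimpleGraph.dist_self]

private lemma exists_shortest_subwalk {V : Type*} {G : SimpleGraph V} (hconn : G.Connected)
    {s t : V} {p : G.Walk s t} (hp : p.length = G.dist s t) {u w : V}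
    (hu : u ∈ p.support) (hw : w ∈ p.support) :
    ∃ q : G.Walk u w, q.length = G.dist u w ∧ ∀ z ∈ q.support, z ∈ p.support := by
  classical
  set p1 := p.takeUntil w hw with hp1
  set p2 := p.dropUntil w hw with hp2
  have hsplit : p1.length + p2.length = p.length := by
    rw [← Walk.length_append, p.take_spec hw]
  have hu' : u ∈ p1.support ∨ u ∈ p2.support := by
    have := p.take_spec hw
    rw [← this, Walk.mem_support_append_iff] at hu
    exact hu
  have hd1 : G.dist s t ≤ G.dist s u + (G.dist u w + G.dist w t) :=
    hconn.dist_triangle.trans (Nat.add_le_add_left hconn.dist_triangle _)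
  rcases hu' with hu1 | hu2
  · refine ⟨p1.dropUntil u hu1, ?_, fun z hz =>
      p.support_takeUntil_subset hw ((p1.support_dropUntil_subset hu1) hz)⟩
    have hsplit1 : (p1.takeUntil u hu1).length + (p1.dropUntil u hu1).length = p1.length := by
      rw [← Walk.length_append, p1.take_spec hu1]
    have h1 : G.dist s u ≤ (p1.takeUntil u hu1).length := SimpleGraph.dist_le _
    have h2 : G.dist w t ≤ p2.length := SimpleGraph.dist_le _
    have h3 : G.dist u w ≤ (p1.dropUntil u hu1).length := SimpleGraph.dist_le _
    omega
  · refine ⟨(p2.takeUntil u hu2).reverse, ?_, fun z hz => ?_⟩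
    · have hsplit2 : (p2.takeUntil u hu2).length + (p2.dropUntil u hu2).length = p2.length := by
        rw [← Walk.length_append, p2.take_spec hu2]
      have h1 : G.dist s w ≤ p1.length := SimpleGraph.dist_le _
      have h2 : G.dist u t ≤ (p2.dropUntil u hu2).length := SimpleGraph.dist_le _
      have h3 : G.dist w u ≤ (p2.takeUntil u hu2).length := SimpleGraph.dist_le _
      have hd2 : G.dist s t ≤ G.dist s w + (G.dist w u + G.dist u t) :=
        hconn.dist_triangle.trans (Nat.add_le_add_left hconn.dist_triangle _)
      have hc : G.dist u w = G.dist w u := G.dist_comm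
      simp only [Walk.length_reverse]
      omega
    · rw [Walk.support_reverse, List.mem_reverse] at hz
      exact p.support_dropUntil_subset hw ((p2.support_takeUntil_subset hu2) hz)

private lemma key_bound {V : Type*} (G : SimpleGraph V) (hconn : G.Connected)
    (δ : ℕ) (hδ : Hyperbolic G δ) :
    ∀ (s t : V) (p : G.Walk s t), IsShortestPath G p → ∀ (x u w : V),
      u ∈ proj G x {v | v ∈ p.support} → w ∈ proj G x {v | v ∈ p.support} →
      G.dist u w ≤ 4 * δ + 1 := by
  intro s t p hp x u w hu hw
  obtain ⟨hum, hue⟩ := hu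
  obtain ⟨hwm, hwe⟩ := hw
  obtain ⟨q, hqlen, hqsub⟩ := exists_shortest_subwalk hconn hp.2 hum hwm
  set D := G.dist u w with hD
  set z := q.getVert (D / 2) with hz
  have hzq : z ∈ q.support :=
    Walk.mem_support_iff_exists_getVert.mpr ⟨D / 2, rfl, by omega⟩
  have hzm : z ∈ {v | v ∈ p.support} := hqsub z hzq
  have h1 : G.dist u z ≤ D / 2 := dist_getVert_le' hconn q (D / 2)
  have h2 : G.dist z w ≤ D - D / 2 := by
    have h := getVert_dist_le' hconn q (D / 2)
    rw [← hz, hqlen] at h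
    omega
  have h3 : D ≤ G.dist u z + G.dist z w := hconn.dist_triangle
  have hxz : setDist G x {v | v ∈ p.support} ≤ G.dist x z :=
    Nat.sInf_le ⟨z, hzm, rfl⟩
  have hhyp := (hδ u w x z).1
  have c1 : G.dist u x = G.dist x u := G.dist_comm
  have c2 : G.dist w z = G.dist z w := G.dist_comm
  have c3 : G.dist w x = G.dist x w := G.dist_comm
  rcases le_total (G.dist u x + G.dist w z) (G.dist u z + G.dist w x) with h | h
  · rw [max_eq_right h] at hhyp; omega
  · rw [max_eq_left h] at hhyp; omega

theorem stmt_14 {V : Type*} [Fintype V] (G : SimpleGraph V) (hconn : G.Connected)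
    (δ : ℕ) (hδ : Hyperbolic G δ) :
    ProjGapLE G (4 * δ) ∧
    ∀ (s t : V) (p : G.Walk s t), IsShortestPath G p → ∀ (x u w : V),
      u ∈ proj G x {v | v ∈ p.support} → w ∈ proj G x {v | v ∈ p.support} →
      G.dist u w ≤ 4 * δ + 1 := by
  refine ⟨?_, key_bound G hconn δ hδ⟩
  intro s t p hp x u w hu hw _ hgt
  have := key_bound G hconn δ hδ s t p hp x u w hu hw
  omega
end

section
/- Let G be a δ-hyperbolic graph. If u, v, w, x are vertices with d(u,w) > max{d(u,v), d(v,w)} + 2δ, then d(v,x) < max{d(x,u), d(x,w)}. -/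
open SimpleGraph

variable {V : Type*}

theorem stmt_15 {V : Type*} [Fintype V] (G : SimpleGraph V) (hconn : G.Connected)
    (δ : ℕ) (hδ : Hyperbolic G δ) (u v w x : V)
    (h : max (G.dist u v) (G.dist v w) + 2 * δ < G.dist u w) :
    G.dist v x < max (G.dist x u) (G.dist x w) := by
  have h1 := (hδ u v w x).2.1
  have e1 : G.dist w x = G.dist x w := G.dist_comm
  have e2 : G.dist u x = G.dist x u := G.dist_comm
  rcases le_total (G.dist u v + G.dist w x) (G.dist u x + G.dist v w) with hc | hc <;>
    simp only [max_eq_left, max_eq_right, hc] at h1 <;> omega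
end

section
/- Let G be a δ-hyperbolic graph and x_0 an arbitrary vertex. Define the sequence x_{i+1} to be a vertex with d(x_i, x_{i+1}) = ecc(x_i), chosen whenever ecc(x_{i+1}) > ecc(x_i). Then the sequence terminates after at most 2δ + 1 iterations, i.e., iterating 'go to a furthest vertex' reaches a mutually furthest pair within 2δ+1 steps. -/
open SimpleGraph

variable {V : Type*}

theorem stmt_16 {V : Type*} [Fintype V] (G : SimpleGraph V) (hconn : G.Connected)
    (δ : ℕ) (hδ : Hyperbolic G δ) (x : ℕ → V)
    (hfurthest : ∀ i, G.dist (x i) (x (i + 1)) = eccV G (x i)) :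
    ¬ (∀ i ≤ 2 * δ + 1, eccV G (x i) < eccV G (x (i + 1))) := by
  intro h
  have hle : ∀ v u : V, G.dist v u ≤ eccV G v := fun v u =>
    Finset.le_sup (f := fun u => G.dist v u) (Finset.mem_univ u)
  -- every distance is at most ecc(x 1) + 2δ
  have key : ∀ u v : V, G.dist u v ≤ eccV G (x 1) + 2 * δ := by
    intro u v
    have h4 := (hδ u v (x 0) (x 1)).1
    have hux0 : G.dist u (x 0) ≤ G.dist (x 0) (x 1) := by
      rw [G.dist_comm, hfurthest 0]; exact hle _ _
    have hvx0 : G.dist v (x 0) ≤ G.dist (x 0) (x 1) := by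
      rw [G.dist_comm, hfurthest 0]; exact hle _ _
    have hux1 : G.dist u (x 1) ≤ eccV G (x 1) := by
      rw [G.dist_comm]; exact hle _ _
    have hvx1 : G.dist v (x 1) ≤ eccV G (x 1) := by
      rw [G.dist_comm]; exact hle _ _
    rcases max_le_iff.mp (le_refl (max (G.dist u (x 0) + G.dist v (x 1))
        (G.dist u (x 1) + G.dist v (x 0)))) with ⟨_, _⟩
    have hmax : max (G.dist u (x 0) + G.dist v (x 1)) (G.dist u (x 1) + G.dist v (x 0))
        ≤ G.dist (x 0) (x 1) + eccV G (x 1) := by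
      apply max_le <;> omega
    omega
  have hbound : ∀ j : ℕ, eccV G (x j) ≤ eccV G (x 1) + 2 * δ := by
    intro j
    exact Finset.sup_le fun u _ => key _ _
  -- strict increase gives ecc(x (1+i)) ≥ ecc(x 1) + i for i ≤ 2δ+1
  have hinc : ∀ i : ℕ, i ≤ 2 * δ + 1 → eccV G (x 1) + i ≤ eccV G (x (1 + i)) := by
    intro i
    induction i with
    | zero => simp
    | succ n ih =>
      intro hn
      have h1 := ih (by omega)
      have h2 := h (1 + n) (by omega)
      have : eccV G (x (1 + n + 1)) = eccV G (x (1 + (n + 1))) := by rw [show 1 + n + 1 = 1 + (n + 1) from rfl]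
      omega
  have := hinc (2 * δ + 1) le_rfl
  have := hbound (1 + (2 * δ + 1))
  omega
end

section
/- Let G be a δ-hyperbolic graph, x_0 any vertex, and x_1 a vertex with d(x_0, x_1) = ecc(x_0). Then diam(G) ≤ ecc(x_1) + 2δ. -/
open SimpleGraph

variable {V : Type*}

theorem stmt_17 {V : Type*} [Fintype V] (G : SimpleGraph V) (hconn : G.Connected)
    (δ : ℕ) (hδ : Hyperbolic G δ) (x₀ x₁ : V)
    (h : G.dist x₀ x₁ = eccV G x₀) :
    diamG G ≤ eccV G x₁ + 2 * δ := by
  apply Finset.sup_le; intro v _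
  apply Finset.sup_le; intro u _
  have h1 := (hδ v u x₀ x₁).1
  have ha : G.dist v x₀ ≤ G.dist x₀ x₁ := by
    rw [h, SimpleGraph.dist_comm]; exact Finset.le_sup (Finset.mem_univ v)
  have hb : G.dist u x₀ ≤ G.dist x₀ x₁ := by
    rw [h, SimpleGraph.dist_comm]; exact Finset.le_sup (Finset.mem_univ u)
  have hc : G.dist u x₁ ≤ eccV G x₁ := by
    rw [SimpleGraph.dist_comm]; exact Finset.le_sup (Finset.mem_univ u)
  have hd : G.dist v x₁ ≤ eccV G x₁ := by
    rw [SimpleGraph.dist_comm]; exact Finset.le_sup (Finset.mem_univ v)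
  have hpos : G.Connected := hconn
  rcases le_max_iff.mp (le_refl (max (G.dist v x₀ + G.dist u x₁) (G.dist v x₁ + G.dist u x₀))) with _ | _
  all_goals omega
end
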